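/- arXiv:math/0512534 — 8 statements merged into one kernel-verified Lean document; each statement's English description precedes it below -/
import Mathlib

section
/- If B ⊆ X has cardinality at most 2^ℵ₀, then there exists a subset J of I such that B ∩ T_J(B) = ∅. -/
open Classical in
/-- The coordinate-flipping map `T_J : X → X` on `X = {0,1}^I`: it keeps the
coordinates in `J` and flips (`b ↦ 1 - b`) the coordinates outside of `J`. -/
noncomputable def coordFlip {I : Type*} (J : Set I) (x : I → Bool) : I → Bool :=
  fun i => if i ∈ J then x i else !(x i)

/-- If `B ⊆ X = {0,1}^I` has cardinality at most `2^ℵ₀` (where `I`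
has cardinality `2^ℵ₀`), then there exists a subset `J` of `I` such that
`B ∩ T_J(B) = ∅`. -/
theorem stmt1 (I : Type) (hI : Cardinal.mk I = Cardinal.continuum)
    (B : Set (I → Bool)) (hB : Cardinal.mk B ≤ Cardinal.continuum) :
    ∃ J : Set I, B ∩ (coordFlip J '' B) = ∅ := by
  classical
  set f : B × B → Set I := fun p => {i | (p.1 : I → Bool) i = (p.2 : I → Bool) i} with hf
  have hlt : Cardinal.mk (B × B) < Cardinal.mk (Set I) := by
    rw [Cardinal.mk_set, hI, Cardinal.mk_prod]
    simp only [Cardinal.lift_id]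
    calc Cardinal.mk B * Cardinal.mk B ≤ Cardinal.continuum * Cardinal.continuum :=
          mul_le_mul' hB hB
      _ = Cardinal.continuum := by simp
      _ < 2 ^ Cardinal.continuum := Cardinal.cantor _
  have hns : ¬ Function.Surjective f := by
    intro hs
    exact absurd (Cardinal.mk_le_of_surjective hs) (not_le.mpr hlt)
  rw [Function.Surjective] at hns
  push_neg at hns
  obtain ⟨J, hJ⟩ := hns
  refine ⟨J, ?_⟩
  ext x
  simp only [Set.mem_inter_iff, Set.mem_image, Set.mem_empty_iff_false, iff_false]
  rintro ⟨hxB, y, hyB, hyx⟩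
  apply hJ ⟨⟨x, hxB⟩, ⟨y, hyB⟩⟩
  ext i
  have : x i = coordFlip J y i := by rw [hyx]
  simp only [hf, Set.mem_setOf_eq]
  by_cases hi : i ∈ J
  · simp [coordFlip, hi] at this
    simp [this, hi]
  · simp [coordFlip, hi] at this
    simp [this, hi]
end

section
/- Every set B ∈ 𝒜 of cardinality at most 2^ℵ₀ satisfies μ(B) = 0. -/
open MeasureTheory

/-- Every set measurable in the product σ-algebra on `I → Bool` depends on
countably many coordinates. -/
lemma stmt3_dep_countable {I : Type} (A : Set (I → Bool)) (hA : MeasurableSet A) :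
    ∃ J : Set I, J.Countable ∧
      ∀ x y : I → Bool, (∀ i ∈ J, x i = y i) → x ∈ A → y ∈ A := by
  let m : MeasurableSpace (I → Bool) :=
    { MeasurableSet' := fun S => ∃ J : Set I, J.Countable ∧
        ∀ x y : I → Bool, (∀ i ∈ J, x i = y i) → x ∈ S → y ∈ S
      measurableSet_empty := ⟨∅, Set.countable_empty, by simp⟩
      measurableSet_compl := fun S hS => by
        obtain ⟨J, hJ, h⟩ := hS
        exact ⟨J, hJ, fun x y hxy hx hy =>
          hx (h y x (fun i hi => (hxy i hi).symm) hy)⟩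
      measurableSet_iUnion := fun f hf => by
        choose J hJc hJ using hf
        refine ⟨⋃ n, J n, Set.countable_iUnion hJc, fun x y hxy hx => ?_⟩
        obtain ⟨n, hn⟩ := Set.mem_iUnion.mp hx
        exact Set.mem_iUnion.mpr
          ⟨n, hJ n x y (fun i hi => hxy i (Set.mem_iUnion.mpr ⟨n, hi⟩)) hn⟩ }
  have hle : (MeasurableSpace.pi : MeasurableSpace (I → Bool)) ≤ m := by
    refine iSup_le fun i => ?_
    rintro S ⟨s, -, rfl⟩
    refine ⟨{i}, Set.countable_singleton i, fun x y hxy hx => ?_⟩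
    have h := hxy i (Set.mem_singleton i)
    simpa only [Set.mem_preimage, ← h] using hx
  exact hle A hA

/-- Let `I` have cardinality `2^ℵ₀`, let `X = {0,1}^I`, and let
`μ` be the (completion of the) product of fair Bernoulli measures on `X`,
characterized by its values on cylinder sets; `𝒜`, the σ-algebra of
`μ`-measurable sets, is formalized by `NullMeasurableSet · μ`.  Every set
`B ∈ 𝒜` of cardinality at most `2^ℵ₀` satisfies `μ(B) = 0`. -/
theorem stmt3 (I : Type) (hI : Cardinal.mk I = Cardinal.continuum)
    (μ : Measure (I → Bool)) (hprob : IsProbabilityMeasure μ)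
    (hcyl : ∀ (s : Finset I) (y : I → Bool),
      μ {x : I → Bool | ∀ i ∈ s, x i = y i} = (1 / 2 : ENNReal) ^ s.card)
    (B : Set (I → Bool)) (hBmeas : NullMeasurableSet B μ)
    (hB : Cardinal.mk B ≤ Cardinal.continuum) :
    μ B = 0 := by
  obtain ⟨A, hAB, hAm, hAeq⟩ := hBmeas.exists_measurable_subset_ae_eq
  rw [← measure_congr hAeq]
  have hAempty : A = ∅ := by
    classical
    by_contra hne
    obtain ⟨x, hx⟩ := Set.nonempty_iff_ne_empty.mpr hne
    obtain ⟨J, hJc, hJ⟩ := stmt3_dep_countable A hAm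
    have hIinf : Infinite I := by
      rw [Cardinal.infinite_iff, hI]
      exact Cardinal.aleph0_le_continuum
    have hJlt : Cardinal.mk J < Cardinal.mk I := by
      rw [hI]
      exact lt_of_le_of_lt hJc.le_aleph0 Cardinal.aleph0_lt_continuum
    have hKcard : Cardinal.mk (↥Jᶜ) = Cardinal.continuum := by
      rw [Cardinal.mk_compl_of_infinite J hJlt, hI]
    -- inject `Jᶜ → Bool` into `B`
    let g : (↥Jᶜ → Bool) → (I → Bool) :=
      fun f i => if h : i ∈ Jᶜ then f ⟨i, h⟩ else x i
    have hgB : ∀ f, g f ∈ B := fun f => by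
      refine hAB (hJ x (g f) (fun i hi => ?_) hx)
      simp only [g, dif_neg (fun h : i ∈ Jᶜ => h hi)]
    have hginj : Function.Injective (fun f => (⟨g f, hgB f⟩ : B)) := by
      intro f1 f2 h
      funext i
      have h' := congrFun (congrArg Subtype.val h) i.1
      simpa only [g, dif_pos i.2] using h'
    have hcard : (2 : Cardinal) ^ Cardinal.continuum ≤ Cardinal.continuum := by
      calc (2 : Cardinal) ^ Cardinal.continuum
          = Cardinal.mk Bool ^ Cardinal.mk (↥Jᶜ) := by rw [Cardinal.mk_bool, hKcard]
        _ = Cardinal.mk (↥Jᶜ → Bool) := Cardinal.power_def Bool ↥Jᶜ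
        _ ≤ Cardinal.mk B := Cardinal.mk_le_of_injective hginj
        _ ≤ Cardinal.continuum := hB
    exact absurd hcard (not_le.mpr (Cardinal.cantor _))
  simp [hAempty]
end

section
/- Let X be any set, let (B_n)_{n∈ℕ} and (C_n)_{n∈ℕ} be families of subsets of X, and set V = ⋃_{n=1}^∞ (B_n × C_n). If (X × X) \ V is contained in the diagonal D = {(x,x) : x ∈ X}, then (X × X) \ V has cardinality at most 2^ℵ₀. -/
/-- Let `X` be any set, let `(B_n)` and `(C_n)` be `ℕ`-indexed
families of subsets of `X`, and set `V = ⋃ n, B_n × C_n`.  If `(X × X) \ V` is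
contained in the diagonal `D = {(x, x) : x ∈ X}`, then `(X × X) \ V` has
cardinality at most `2^ℵ₀`. -/
theorem stmt5 (X : Type*) (B C : ℕ → Set X)
    (hdiag : Set.univ \ (⋃ n, B n ×ˢ C n) ⊆ {p : X × X | p.1 = p.2}) :
    Cardinal.mk ↥(Set.univ \ (⋃ n, B n ×ˢ C n) : Set (X × X)) ≤
      Cardinal.continuum := by
  set V := ⋃ n, B n ×ˢ C n with hV
  have key : ∀ p : ↥(Set.univ \ V : Set (X × X)), (p : X × X).1 = (p : X × X).2 :=
    fun p => hdiag p.2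
  -- injective map into Set ℕ × Set ℕ
  have hinj : Function.Injective
      (fun p : ↥(Set.univ \ V : Set (X × X)) =>
        (ULift.up (({n | (p : X × X).1 ∈ B n}, {n | (p : X × X).1 ∈ C n}) : Set ℕ × Set ℕ))) := by
    rintro ⟨⟨x, x'⟩, hp⟩ ⟨⟨y, y'⟩, hq⟩ h
    have hx : x = x' := hdiag hp
    have hy : y = y' := hdiag hq
    subst hx; subst hy
    simp only [ULift.up_inj, Prod.mk.injEq, Set.ext_iff, Set.mem_setOf_eq] at h
    obtain ⟨hB, hC⟩ := h
    by_cases hxy : x = y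
    · subst hxy; rfl
    · exfalso
      have hxyV : ((x, y) : X × X) ∈ V := by
        by_contra hcon
        exact hxy (hdiag ⟨Set.mem_univ _, hcon⟩)
      obtain ⟨n, hxB, hyC⟩ := Set.mem_iUnion.mp hxyV
      have hxC : x ∈ C n := (hC n).mpr hyC
      exact hp.2 (Set.mem_iUnion.mpr ⟨n, hxB, hxC⟩)
  calc Cardinal.mk ↥(Set.univ \ V : Set (X × X)) ≤ Cardinal.mk (ULift (Set ℕ × Set ℕ)) :=
        Cardinal.mk_le_of_injective hinj
    _ = Cardinal.lift (Cardinal.mk (Set ℕ × Set ℕ)) := Cardinal.mk_uLift _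
    _ = Cardinal.lift (Cardinal.continuum * Cardinal.continuum) := by
        congr 1
        simp [Cardinal.mk_set, Cardinal.mk_denumerable, Cardinal.two_power_aleph0]
    _ = Cardinal.continuum := by simp [Cardinal.lift_continuum]
end

section
/- If (B_n)_{n∈ℕ} and (C_n)_{n∈ℕ} are sequences of sets in 𝒜 whose union of rectangles ⋃_{n=1}^∞ (B_n × C_n) contains (X × X) \ D, where D = {(x,x) : x ∈ X} is the diagonal, then ∑_{n=1}^∞ μ(B_n ∩ C_n) ≥ 1; equivalently, ∑_{n=1}^∞ ν(B_n × C_n) ≥ 1 where ν is the pushforward of μ under the diagonal map β(x) = (x,x). -/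
open MeasureTheory

/-- Every set measurable in the product σ-algebra on `I → Bool` depends on only
countably many coordinates. -/
theorem exists_countable_dep {I : Type} {A : Set (I → Bool)} (hA : MeasurableSet A) :
    ∃ J : Set I, J.Countable ∧
      ∀ x y : I → Bool, (∀ i ∈ J, x i = y i) → (x ∈ A ↔ y ∈ A) := by
  let m' : MeasurableSpace (I → Bool) :=
    { MeasurableSet' := fun A => ∃ J : Set I, J.Countable ∧
        ∀ x y : I → Bool, (∀ i ∈ J, x i = y i) → (x ∈ A ↔ y ∈ A)
      measurableSet_empty := ⟨∅, Set.countable_empty, by simp⟩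
      measurableSet_compl := by
        rintro A ⟨J, hJc, hJ⟩
        exact ⟨J, hJc, fun x y hxy => by
          simp only [Set.mem_compl_iff, hJ x y hxy]⟩
      measurableSet_iUnion := by
        intro s hs
        choose J hJc hJ using hs
        refine ⟨⋃ n, J n, Set.countable_iUnion hJc, fun x y hxy => ?_⟩
        simp only [Set.mem_iUnion]
        exact exists_congr fun n =>
          hJ n x y fun i hi => hxy i (Set.mem_iUnion.2 ⟨n, hi⟩) }
  have hle : (MeasurableSpace.pi : MeasurableSpace (I → Bool)) ≤ m' := by
    refine iSup_le fun i => ?_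
    have hm : Measurable[m'] (fun x : I → Bool => x i) := by
      intro A _
      refine ⟨{i}, Set.countable_singleton i, fun x y hxy => ?_⟩
      simp only [Set.mem_preimage, hxy i rfl]
    exact measurable_iff_comap_le.mp hm
  exact hle A hA

/-- Let `I` have cardinality `2^ℵ₀`, let `X = {0,1}^I`, let `μ` be
the product of fair Bernoulli measures (characterized by its values on cylinder
sets), and let `𝒜` be the σ-algebra of `μ`-measurable sets, formalized as the
measurable space of `NullMeasurableSpace X μ`, whose measure is the completion
`μ.completion`.  The product σ-algebra `𝒜 ⊗ 𝒜` is the product measurable-space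
structure on `NullMeasurableSpace X μ × NullMeasurableSpace X μ`, and
`ν = β[μ]` is the pushforward of the (completed) measure under the diagonal map
`β(x) = (x, x)`.  If `(B_n)` and `(C_n)` are sequences of sets in `𝒜` whose
union of rectangles `⋃ n, B_n × C_n` contains `(X × X) \ D`, where `D` is the
diagonal, then `∑ n, μ(B_n ∩ C_n) ≥ 1`; equivalently,
`∑ n, ν(B_n × C_n) ≥ 1`. -/
theorem stmt6 (I : Type) (hI : Cardinal.mk I = Cardinal.continuum)
    (μ : Measure (I → Bool)) (hprob : IsProbabilityMeasure μ)
    (hcyl : ∀ (s : Finset I) (y : I → Bool),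
      μ {x : I → Bool | ∀ i ∈ s, x i = y i} = (1 / 2 : ENNReal) ^ s.card)
    (B C : ℕ → Set (NullMeasurableSpace (I → Bool) μ))
    (hB : ∀ n, MeasurableSet (B n)) (hC : ∀ n, MeasurableSet (C n))
    (hcover : {p : NullMeasurableSpace (I → Bool) μ ×
        NullMeasurableSpace (I → Bool) μ | p.1 ≠ p.2} ⊆ ⋃ n, B n ×ˢ C n) :
    1 ≤ ∑' n, μ.completion (B n ∩ C n) ∧
    1 ≤ ∑' n, (Measure.map (fun x => (x, x)) μ.completion) (B n ×ˢ C n) := by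
  classical
  -- view B n, C n as sets of I → Bool
  let B' : ℕ → Set (I → Bool) := B
  let C' : ℕ → Set (I → Bool) := C
  have hCnull : ∀ n, NullMeasurableSet (C' n) μ := fun n => hC n
  -- choose measurable supersets C₀ n a.e. equal to C n
  have h0 : ∀ n, ∃ t ⊇ C' n, MeasurableSet t ∧ t =ᵐ[μ] C' n :=
    fun n => (hCnull n).exists_measurable_superset_ae_eq
  choose C₀ hsub hC₀m hae using h0
  -- null sets
  have hnull : ∀ n, μ (C₀ n \ C' n) = 0 := fun n =>
    MeasureTheory.ae_le_set.mp (hae n).le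
  -- countable dependence
  have hdep : ∀ n, ∃ J : Set I, J.Countable ∧
      ∀ x y : I → Bool, (∀ i ∈ J, x i = y i) → (x ∈ C₀ n ↔ y ∈ C₀ n) :=
    fun n => exists_countable_dep (hC₀m n)
  choose K hKc hK using hdep
  -- pick a coordinate outside all the K n
  have hIunc : ¬ Countable I := by
    intro h
    have := Cardinal.mk_le_aleph0 (α := I)
    rw [hI] at this
    exact absurd this (not_le.mpr Cardinal.aleph0_lt_continuum)
  obtain ⟨i₀, hi₀⟩ : ∃ i₀ : I, i₀ ∉ ⋃ n, K n := by
    by_contra h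
    push_neg at h
    have hsubU : (Set.univ : Set I) ⊆ ⋃ n, K n := fun i _ => h i
    have : (Set.univ : Set I).Countable := (Set.countable_iUnion hKc).mono hsubU
    exact hIunc (Set.countable_univ_iff.mp this)
  -- main claim: the complement of ⋃ (B n ∩ C n) is contained in a null set
  set U : Set (I → Bool) := ⋃ n, B' n ∩ C' n with hU
  have hAsub : Uᶜ ⊆ ⋃ n, (C₀ n \ C' n) := by
    intro x hx
    by_contra hxN
    simp only [Set.mem_iUnion, not_exists] at hxN
    -- flip coordinate i₀
    set y : I → Bool := Function.update x i₀ (!(x i₀)) with hy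
    have hyx : x ≠ y := by
      intro h
      have h2 : x i₀ = y i₀ := by rw [← h]
      rw [hy, Function.update_self] at h2
      cases hb : x i₀ <;> rw [hb] at h2 <;> simp at h2
    have hmem : ((x, y) : NullMeasurableSpace (I → Bool) μ ×
        NullMeasurableSpace (I → Bool) μ) ∈ ⋃ n, B n ×ˢ C n := hcover hyx
    obtain ⟨n, hn⟩ := Set.mem_iUnion.mp hmem
    have hxB : x ∈ B' n := hn.1
    have hyC : y ∈ C' n := hn.2
    have hyC₀ : y ∈ C₀ n := hsub n hyC
    have hxy : ∀ i ∈ K n, y i = x i := by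
      intro i hi
      have hne : i ≠ i₀ := by
        intro h; exact hi₀ (Set.mem_iUnion.2 ⟨n, h ▸ hi⟩)
      rw [hy, Function.update_of_ne hne]
    have hxC₀ : x ∈ C₀ n := (hK n y x hxy).mp hyC₀
    have hxC : x ∈ C' n := by
      by_contra hxc
      exact hxN n ⟨hxC₀, hxc⟩
    exact hx (Set.mem_iUnion.2 ⟨n, hxB, hxC⟩)
  have hAnull : μ Uᶜ = 0 := by
    refine le_antisymm ?_ (zero_le)
    calc μ Uᶜ ≤ μ (⋃ n, (C₀ n \ C' n)) := measure_mono hAsub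
      _ ≤ ∑' n, μ (C₀ n \ C' n) := measure_iUnion_le _
      _ = 0 := by simp [hnull]
  have hUone : 1 ≤ μ U := by
    have h1 : μ (Set.univ : Set (I → Bool)) = 1 := measure_univ
    have h2 : μ Set.univ ≤ μ Uᶜ + μ U := by
      rw [← Set.compl_union_self U]
      exact measure_union_le _ _
    rw [h1, hAnull, zero_add] at h2
    exact h2
  have key : (1 : ENNReal) ≤ ∑' n, μ (B' n ∩ C' n) :=
    le_trans hUone (measure_iUnion_le _)
  constructor
  · refine le_trans key (le_of_eq (tsum_congr fun n => ?_))
    exact (Measure.completion_apply μ _).symm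
  · have hmeas : Measurable (fun x : NullMeasurableSpace (I → Bool) μ => (x, x)) :=
      measurable_id.prodMk measurable_id
    have heq : ∀ n, (Measure.map (fun x => (x, x)) μ.completion) (B n ×ˢ C n)
        = μ.completion (B n ∩ C n) := by
      intro n
      rw [Measure.map_apply hmeas ((hB n).prod (hC n))]
      have hpre : (fun x : NullMeasurableSpace (I → Bool) μ => (x, x)) ⁻¹' (B n ×ˢ C n)
          = B n ∩ C n := by
        ext x
        simp [Set.mem_prod]
      rw [hpre]
    calc (1 : ENNReal) ≤ ∑' n, μ (B' n ∩ C' n) := key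
      _ = ∑' n, (Measure.map (fun x => (x, x)) μ.completion) (B n ×ˢ C n) := by
          congr 1
          funext n
          rw [heq n]
          exact (Measure.completion_apply μ _).symm
end

section
/- For every G ∈ 𝒜 ⊗ 𝒜 with G ∪ D = X × X one has ν(G) = 1. -/
open MeasureTheory

namespace Stmt8Aux

open Set

section general

variable {ι : Type*} {π : ι → Type*} [m : ∀ i, MeasurableSpace (π i)]

lemma cylinderEvents_le_comap_restrict (J : Set ι) :
    cylinderEvents (X := π) J ≤ MeasurableSpace.comap (J.restrict) MeasurableSpace.pi := by
  refine iSup₂_le fun i hi => ?_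
  have h1 : (fun σ : ∀ i, π i => σ i) =
      (fun f : ∀ j : J, π j => f ⟨i, hi⟩) ∘ J.restrict := rfl
  rw [h1, ← MeasurableSpace.comap_comp]
  exact MeasurableSpace.comap_mono
    (measurable_iff_comap_le.mp (measurable_pi_apply (⟨i, hi⟩ : J)))

lemma mem_iff_of_eqOn {J : Set ι} {s : Set (∀ i, π i)}
    (hs : MeasurableSet[cylinderEvents J] s) {x y : ∀ i, π i}
    (h : ∀ i ∈ J, x i = y i) : x ∈ s ↔ y ∈ s := by
  obtain ⟨t, -, rfl⟩ := cylinderEvents_le_comap_restrict J s hs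
  have hxy : J.restrict x = J.restrict y := funext fun i => h i i.2
  rw [Set.mem_preimage, Set.mem_preimage, hxy]

lemma exists_countable_cylinderEvents {s : Set (∀ i, π i)}
    (hs : MeasurableSet[MeasurableSpace.pi] s) :
    ∃ J : Set ι, J.Countable ∧ MeasurableSet[cylinderEvents J] s := by
  let m' : MeasurableSpace (∀ i, π i) :=
    { MeasurableSet' := fun s =>
        ∃ J : Set ι, J.Countable ∧ MeasurableSet[cylinderEvents J] s
      measurableSet_empty := ⟨∅, countable_empty, @MeasurableSet.empty _ (cylinderEvents ∅)⟩
      measurableSet_compl := fun s ⟨J, hJ, hsJ⟩ => ⟨J, hJ, hsJ.compl⟩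
      measurableSet_iUnion := fun f hf => by
        choose J hJc hJm using hf
        exact ⟨⋃ n, J n, countable_iUnion hJc, MeasurableSet.iUnion fun n =>
          cylinderEvents_mono (Set.subset_iUnion J n) _ (hJm n)⟩ }
  have hle : MeasurableSpace.pi ≤ m' := by
    refine iSup_le fun i => ?_
    rintro s ⟨t, ht, rfl⟩
    exact ⟨{i}, countable_singleton i,
      measurable_cylinderEvent_apply (mem_singleton i) ht⟩
  exact hle s hs

lemma exists_determining {α : Type*} [mα : MeasurableSpace α] {G : Set (α × α)}
    (hG : MeasurableSet G) :
    ∃ A B : ℕ → Set α, (∀ n, MeasurableSet (A n)) ∧ (∀ n, MeasurableSet (B n)) ∧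
      ∀ p q : α × α, (∀ n, p.1 ∈ A n ↔ q.1 ∈ A n) → (∀ n, p.2 ∈ B n ↔ q.2 ∈ B n) →
        (p ∈ G ↔ q ∈ G) := by
  let m' : MeasurableSpace (α × α) :=
    { MeasurableSet' := fun G =>
        ∃ A B : ℕ → Set α, (∀ n, MeasurableSet (A n)) ∧ (∀ n, MeasurableSet (B n)) ∧
          ∀ p q : α × α, (∀ n, p.1 ∈ A n ↔ q.1 ∈ A n) → (∀ n, p.2 ∈ B n ↔ q.2 ∈ B n) →
            (p ∈ G ↔ q ∈ G)
      measurableSet_empty := ⟨fun _ => ∅, fun _ => ∅, fun _ => MeasurableSet.empty,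
        fun _ => MeasurableSet.empty, fun _ _ _ _ => Iff.rfl⟩
      measurableSet_compl := fun G ⟨A, B, hA, hB, hP⟩ =>
        ⟨A, B, hA, hB, fun p q h1 h2 => not_congr (hP p q h1 h2)⟩
      measurableSet_iUnion := fun f hf => by
        choose A B hA hB hP using hf
        refine ⟨fun k => A k.unpair.1 k.unpair.2, fun k => B k.unpair.1 k.unpair.2,
          fun k => hA _ _, fun k => hB _ _, fun p q h1 h2 => ?_⟩
        simp only [Set.mem_iUnion]
        refine exists_congr fun n => hP n p q (fun j => ?_) (fun j => ?_)
        · simpa [Nat.unpair_pair] using h1 (Nat.pair n j)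
        · simpa [Nat.unpair_pair] using h2 (Nat.pair n j) }
  have hle : (Prod.instMeasurableSpace : MeasurableSpace (α × α)) ≤ m' := by
    refine sup_le ?_ ?_
    · rintro s ⟨t, ht, rfl⟩
      exact ⟨fun _ => t, fun _ => ∅, fun _ => ht, fun _ => MeasurableSet.empty,
        fun p q h1 _ => h1 0⟩
    · rintro s ⟨t, ht, rfl⟩
      exact ⟨fun _ => ∅, fun _ => t, fun _ => MeasurableSet.empty, fun _ => ht,
        fun p q _ h2 => h2 0⟩
  exact hle G hG

end general

section bool

variable {I : Type}

def cylC (I : Type) : Set (Set (I → Bool)) :=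
  {s | ∃ (fs : Finset I) (y : I → Bool), s = {x | ∀ i ∈ fs, x i = y i}}

lemma measurableSet_cyl (fs : Finset I) (y : I → Bool) :
    MeasurableSet {x : I → Bool | ∀ i ∈ fs, x i = y i} := by
  have : {x : I → Bool | ∀ i ∈ fs, x i = y i}
      = ⋂ i ∈ fs, (fun x : I → Bool => x i) ⁻¹' {y i} := by
    ext x; simp
  rw [this]
  exact MeasurableSet.biInter fs.countable_toSet fun i _ =>
    (measurable_pi_apply i) (measurableSet_singleton _)

lemma pi_eq_generateFrom_cylC :
    (MeasurableSpace.pi : MeasurableSpace (I → Bool))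
      = MeasurableSpace.generateFrom (cylC I) := by
  refine le_antisymm ?_ ?_
  · refine iSup_le fun i => ?_
    have hm : Measurable[MeasurableSpace.generateFrom (cylC I)]
        (fun x : I → Bool => x i) := by
      refine @measurable_to_countable' Bool (I → Bool) _ _
        (MeasurableSpace.generateFrom (cylC I)) _ fun b => ?_
      refine MeasurableSpace.measurableSet_generateFrom ⟨{i}, fun _ => b, ?_⟩
      ext x; simp
    exact measurable_iff_comap_le.mp hm
  · refine MeasurableSpace.generateFrom_le ?_
    rintro s ⟨fs, y, rfl⟩
    exact measurableSet_cyl fs y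

lemma isPiSystem_cylC : IsPiSystem (cylC I) := by
  classical
  rintro s ⟨fs, y, rfl⟩ t ⟨gs, z, rfl⟩ ⟨w, hws, hwt⟩
  refine ⟨fs ∪ gs, w, ?_⟩
  ext x
  simp only [Set.mem_inter_iff, Set.mem_setOf_eq, Finset.mem_union]
  constructor
  · rintro ⟨h1, h2⟩ i (hi | hi)
    · rw [h1 i hi, ← hws i hi]
    · rw [h2 i hi, ← hwt i hi]
  · intro h
    exact ⟨fun i hi => (h i (Or.inl hi)).trans (hws i hi),
      fun i hi => (h i (Or.inr hi)).trans (hwt i hi)⟩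

lemma measurable_flip (i₀ : I) [DecidableEq I] :
    Measurable (fun x : I → Bool => Function.update x i₀ (!x i₀)) := by
  refine measurable_pi_iff.mpr fun j => ?_
  by_cases hj : j = i₀
  · subst hj
    simp only [Function.update_self]
    exact (measurable_from_top (f := Bool.not)).comp (measurable_pi_apply _)
  · simp only [Function.update_of_ne hj]
    exact measurable_pi_apply _

lemma map_flip_eq (μ : Measure (I → Bool)) [IsProbabilityMeasure μ]
    (hcyl : ∀ (s : Finset I) (y : I → Bool),
      μ {x : I → Bool | ∀ i ∈ s, x i = y i} = (1 / 2 : ENNReal) ^ s.card)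
    (i₀ : I) [DecidableEq I] :
    Measure.map (fun x : I → Bool => Function.update x i₀ (!x i₀)) μ = μ := by
  have hflip := measurable_flip i₀
  have : IsProbabilityMeasure (Measure.map (fun x : I → Bool =>
      Function.update x i₀ (!x i₀)) μ) := Measure.isProbabilityMeasure_map hflip.aemeasurable
  refine ext_of_generate_finite (cylC I) pi_eq_generateFrom_cylC isPiSystem_cylC ?_ (by simp)
  rintro s ⟨fs, y, rfl⟩
  rw [Measure.map_apply hflip (measurableSet_cyl fs y)]
  have hpre : (fun x : I → Bool => Function.update x i₀ (!x i₀)) ⁻¹'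
      {x | ∀ i ∈ fs, x i = y i}
      = {x | ∀ i ∈ fs, x i = Function.update y i₀ (!y i₀) i} := by
    ext x
    simp only [Set.mem_preimage, Set.mem_setOf_eq]
    refine forall₂_congr fun i hi => ?_
    by_cases h : i = i₀
    · subst h
      simp only [Function.update_self]
      constructor <;> (intro h'; cases hb : x i <;> cases hb' : y i <;> simp_all)
    · simp only [Function.update_of_ne h]
  rw [hpre, hcyl, hcyl]

end bool

end Stmt8Aux

/-- Let `I` have cardinality `2^ℵ₀`, let `X = {0,1}^I`, let `μ` be
the product of fair Bernoulli measures (characterized by its values on cylinder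
sets), and let `𝒜` be the σ-algebra of `μ`-measurable sets, formalized as the
measurable space of `NullMeasurableSpace X μ`, whose measure is the completion
`μ.completion`.  The product σ-algebra `𝒜 ⊗ 𝒜` is the product measurable-space
structure on `NullMeasurableSpace X μ × NullMeasurableSpace X μ`, `D` is the
diagonal, and `ν = β[μ]` is the pushforward of the (completed) measure under
the diagonal map `β(x) = (x, x)`.  For every `G ∈ 𝒜 ⊗ 𝒜` with
`G ∪ D = X × X` one has `ν(G) = 1`. -/
theorem stmt8 (I : Type) (hI : Cardinal.mk I = Cardinal.continuum)
    (μ : Measure (I → Bool)) (hprob : IsProbabilityMeasure μ)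
    (hcyl : ∀ (s : Finset I) (y : I → Bool),
      μ {x : I → Bool | ∀ i ∈ s, x i = y i} = (1 / 2 : ENNReal) ^ s.card)
    (G : Set (NullMeasurableSpace (I → Bool) μ × NullMeasurableSpace (I → Bool) μ))
    (hG : MeasurableSet G)
    (hGD : G ∪ {p : NullMeasurableSpace (I → Bool) μ ×
        NullMeasurableSpace (I → Bool) μ | p.1 = p.2} = Set.univ) :
    Measure.map (fun x : NullMeasurableSpace (I → Bool) μ => (x, x))
      μ.completion G = 1 := by
  classical
  haveI := hprob
  have hβ : Measurable (fun x : NullMeasurableSpace (I → Bool) μ => (x, x)) :=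
    measurable_id.prodMk measurable_id
  rw [Measure.map_apply hβ hG]
  change μ ((fun x : NullMeasurableSpace (I → Bool) μ => (x, x)) ⁻¹' G) = 1
  -- determining sequences of null measurable sets
  obtain ⟨A, B, hA, hB, hP⟩ := Stmt8Aux.exists_determining hG
  have hB' : ∀ n, @NullMeasurableSet (I → Bool) MeasurableSpace.pi (B n) μ := hB
  choose T hTsub hTm hTeq using fun n => (hB' n).exists_measurable_subset_ae_eq
  -- countable coordinate supports
  choose J hJc hJm using fun n => Stmt8Aux.exists_countable_cylinderEvents (hTm n)
  -- pick an unused coordinate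
  obtain ⟨i₀, hi₀⟩ : ∃ i₀ : I, i₀ ∉ ⋃ n, J n := by
    by_contra h
    push_neg at h
    have huniv : (Set.univ : Set I).Countable :=
      (Set.countable_iUnion hJc).mono (fun i _ => h i)
    haveI : Countable I := Set.countable_univ_iff.mp huniv
    have hle : Cardinal.mk I ≤ Cardinal.aleph0 := Cardinal.mk_le_aleph0
    rw [hI] at hle
    exact Cardinal.aleph0_lt_continuum.not_ge hle
  set flip : (I → Bool) → (I → Bool) := fun x => Function.update x i₀ (!x i₀) with hflipdef
  have hflipm : Measurable flip := Stmt8Aux.measurable_flip i₀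
  have hmap : Measure.map flip μ = μ := Stmt8Aux.map_flip_eq μ hcyl i₀
  -- the bad set
  set Z : Set (I → Bool) := ⋃ n, ((B n \ T n) ∪ (T n \ B n)) with hZdef
  have hZ0 : μ Z = 0 := by
    refine measure_iUnion_null fun n => ?_
    have h := ae_eq_set.mp (hTeq n)
    exact measure_union_null h.2 h.1
  have hflipZ0 : μ (flip ⁻¹' Z) = 0 := by
    have h1 : μ (flip ⁻¹' toMeasurable μ Z) = 0 := by
      rw [← Measure.map_apply hflipm (measurableSet_toMeasurable μ Z), hmap,
        measure_toMeasurable]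
      exact hZ0
    exact measure_mono_null (Set.preimage_mono (subset_toMeasurable μ Z)) h1
  have hW0 : μ (Z ∪ flip ⁻¹' Z) = 0 := measure_union_null hZ0 hflipZ0
  -- a.e. x, (x, x) ∈ G
  have hsub : (Z ∪ flip ⁻¹' Z)ᶜ ⊆
      (fun x : NullMeasurableSpace (I → Bool) μ => (x, x)) ⁻¹' G := by
    intro x hx
    have hxZ : x ∉ Z := fun h => hx (Or.inl h)
    have hyZ : flip x ∉ Z := fun h => hx (Or.inr h)
    set y : I → Bool := flip x with hy
    have hxy : x ≠ y := by
      intro h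
      have h2 : x i₀ = !x i₀ := by
        conv_lhs => rw [h]
        simp [hy, hflipdef, Function.update_self]
      cases h3 : x i₀ <;> simp [h3] at h2
    have hxyG : ((x, y) : NullMeasurableSpace (I → Bool) μ ×
        NullMeasurableSpace (I → Bool) μ) ∈ G := by
      have hmem := Set.eq_univ_iff_forall.mp hGD
        ((x, y) : NullMeasurableSpace (I → Bool) μ × NullMeasurableSpace (I → Bool) μ)
      rcases hmem with h | h
      · exact h
      · exact absurd h hxy
    have key : ∀ n, (x ∈ B n ↔ y ∈ B n) := by
      intro n
      have hx1 : x ∈ B n ↔ x ∈ T n := by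
        constructor
        · intro h; by_contra h'
          exact hxZ (Set.mem_iUnion.mpr ⟨n, Or.inl ⟨h, h'⟩⟩)
        · intro h; by_contra h'
          exact hxZ (Set.mem_iUnion.mpr ⟨n, Or.inr ⟨h, h'⟩⟩)
      have hy1 : y ∈ B n ↔ y ∈ T n := by
        constructor
        · intro h; by_contra h'
          exact hyZ (Set.mem_iUnion.mpr ⟨n, Or.inl ⟨h, h'⟩⟩)
        · intro h; by_contra h'
          exact hyZ (Set.mem_iUnion.mpr ⟨n, Or.inr ⟨h, h'⟩⟩)
      have hT : x ∈ T n ↔ y ∈ T n := by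
        refine Stmt8Aux.mem_iff_of_eqOn (hJm n) fun i hi => ?_
        have hne : i ≠ i₀ := by
          intro h; exact hi₀ (h ▸ Set.mem_iUnion.mpr ⟨n, hi⟩)
        show x i = Function.update x i₀ (!x i₀) i
        exact (Function.update_of_ne hne _ _).symm
      exact hx1.trans (hT.trans hy1.symm)
    exact (hP (x, x) (x, y) (fun _ => Iff.rfl) key).mpr hxyG
  -- conclude
  refine le_antisymm prob_le_one ?_
  have hc : μ ((fun x : NullMeasurableSpace (I → Bool) μ => (x, x)) ⁻¹' G)ᶜ = 0 := by
    refine measure_mono_null ?_ hW0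
    intro x hx
    by_contra h
    exact hx (hsub h)
  calc (1 : ENNReal) = μ Set.univ := measure_univ.symm
    _ ≤ μ ((fun x : NullMeasurableSpace (I → Bool) μ => (x, x)) ⁻¹' G)
        + μ ((fun x : NullMeasurableSpace (I → Bool) μ => (x, x)) ⁻¹' G)ᶜ := by
      exact measure_univ_le_add_compl _
    _ = μ ((fun x : NullMeasurableSpace (I → Bool) μ => (x, x)) ⁻¹' G) := by
      rw [hc, add_zero]
end

section
/- The diagonal D = {(x,x) : x ∈ X} does not belong to the ν-completion Σ of the product σ-algebra 𝒜 ⊗ 𝒜 on X × X. -/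
open MeasureTheory Set

namespace Stmt9Aux

variable {I : Type}

/-- A measurable set in the product σ-algebra on `I → Bool` depends on countably many
coordinates. -/
lemma depends_of_measurable {B : Set (I → Bool)} (hB : MeasurableSet B) :
    ∃ J : Set I, J.Countable ∧
      ∀ x x' : I → Bool, (∀ j ∈ J, x j = x' j) → (x ∈ B ↔ x' ∈ B) := by
  have hB' : MeasurableSet[⨆ i : I,
      MeasurableSpace.comap (fun x : I → Bool => x i) inferInstance] B := hB
  rw [MeasurableSpace.measurableSet_iSup] at hB'
  clear hB
  induction hB' with
  | basic s hs =>
      obtain ⟨i, hi⟩ := hs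
      rw [MeasurableSpace.measurableSet_comap] at hi
      obtain ⟨t, -, rfl⟩ := hi
      refine ⟨{i}, countable_singleton i, fun x x' h => ?_⟩
      have := h i (mem_singleton i)
      simp only [mem_preimage, this]
  | empty => exact ⟨∅, countable_empty, by simp⟩
  | compl s _ ih =>
      obtain ⟨J, hJ, hdep⟩ := ih
      exact ⟨J, hJ, fun x x' h => by simp [hdep x x' h]⟩
  | iUnion f _ ih =>
      choose J hJ hdep using ih
      refine ⟨⋃ n, J n, countable_iUnion hJ, fun x x' h => ?_⟩
      simp only [mem_iUnion]
      exact exists_congr fun n => hdep n x x' fun j hj => h j (mem_iUnion.2 ⟨n, hj⟩)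

/-- Null-measurable version: a `μ`-null-measurable set depends on countably many
coordinates outside a null set. -/
lemma depends_of_null {μ : Measure (I → Bool)} {B : Set (I → Bool)}
    (hB : NullMeasurableSet B μ) :
    ∃ J : Set I, J.Countable ∧ ∃ N : Set (I → Bool), μ N = 0 ∧
      ∀ x x' : I → Bool, x ∉ N → x' ∉ N → (∀ j ∈ J, x j = x' j) → (x ∈ B ↔ x' ∈ B) := by
  obtain ⟨B₀, -, hB₀m, heq⟩ := hB.exists_measurable_subset_ae_eq
  obtain ⟨J, hJ, hdep⟩ := depends_of_measurable hB₀m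
  have h0 : μ ((B \ B₀) ∪ (B₀ \ B)) = 0 := by
    have := ae_eq_set.mp heq
    exact measure_union_null this.2 this.1
  refine ⟨J, hJ, (B \ B₀) ∪ (B₀ \ B), h0, fun x x' hx hx' h => ?_⟩
  simp only [mem_union, mem_diff, not_or, not_and, not_not] at hx hx'
  have h1 : x ∈ B ↔ x ∈ B₀ := ⟨fun hb => hx.1 hb, fun hb => hx.2 hb⟩
  have h2 : x' ∈ B ↔ x' ∈ B₀ := ⟨fun hb => hx'.1 hb, fun hb => hx'.2 hb⟩
  rw [h1, h2, hdep x x' h]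

/-- Cylinder sets. -/
def cyl (s : Finset I) (y : I → Bool) : Set (I → Bool) := {x | ∀ i ∈ s, x i = y i}

lemma measurableSet_cyl (s : Finset I) (y : I → Bool) : MeasurableSet (cyl s y) := by
  have : cyl s y = ⋂ i ∈ (s : Set I), (fun x : I → Bool => x i) ⁻¹' {y i} := by
    ext x; simp [cyl]
  rw [this]
  exact MeasurableSet.biInter s.countable_toSet fun i _ =>
    (measurable_pi_apply i) (measurableSet_singleton (y i))

lemma pi_eq_generateFrom :
    (inferInstance : MeasurableSpace (I → Bool)) =
      MeasurableSpace.generateFrom {S : Set (I → Bool) | ∃ s y, S = cyl s y} := by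
  have h1 : (⨆ i : I, MeasurableSpace.comap (fun x : I → Bool => x i) inferInstance)
      ≤ MeasurableSpace.generateFrom {S : Set (I → Bool) | ∃ s y, S = cyl s y} := by
    refine iSup_le fun i => ?_
    have hm : @Measurable (I → Bool) Bool
        (MeasurableSpace.generateFrom {S : Set (I → Bool) | ∃ s y, S = cyl s y}) _
        (fun x => x i) := by
      refine @measurable_to_countable' Bool (I → Bool) _ _
        (MeasurableSpace.generateFrom {S : Set (I → Bool) | ∃ s y, S = cyl s y})
        (fun x => x i) (fun b => ?_)
      refine MeasurableSpace.measurableSet_generateFrom ⟨{i}, fun _ => b, ?_⟩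
      ext x; simp [cyl]
    exact measurable_iff_comap_le.mp hm
  refine le_antisymm h1 (MeasurableSpace.generateFrom_le ?_)
  rintro _ ⟨s, y, rfl⟩
  exact measurableSet_cyl s y

lemma isPiSystem_cyl : IsPiSystem {S : Set (I → Bool) | ∃ s y, S = cyl s y} := by
  classical
  rintro _ ⟨s, y, rfl⟩ _ ⟨t, w, rfl⟩ hne
  obtain ⟨x₀, hx₀s, hx₀t⟩ := hne
  refine ⟨s ∪ t, fun j => if j ∈ s then y j else w j, ?_⟩
  ext x
  simp only [cyl, mem_inter_iff, mem_setOf_eq, Finset.mem_union]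
  constructor
  · rintro ⟨h1, h2⟩ j hj
    by_cases hjs : j ∈ s
    · simp [hjs, h1 j hjs]
    · simp [hjs, h2 j (hj.resolve_left hjs)]
  · intro h
    constructor
    · intro j hj
      have := h j (Or.inl hj)
      simpa [hj] using this
    · intro j hj
      by_cases hjs : j ∈ s
      · have := h j (Or.inl hjs)
        rw [if_pos hjs] at this
        rw [this, ← hx₀s j hjs]
        exact hx₀t j hj
      · have := h j (Or.inr hj)
        rwa [if_neg hjs] at this

lemma measurable_flip [DecidableEq I] (i : I) :
    Measurable (fun x : I → Bool => Function.update x i (!x i)) := by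
  rw [measurable_pi_iff]
  intro j
  by_cases hj : j = i
  · subst hj
    simp only [Function.update_self]
    have h1 : Measurable (fun b : Bool => !b) := measurable_from_top
    exact h1.comp (measurable_pi_apply j)
  · simp only [Function.update_of_ne hj]
    exact measurable_pi_apply j

lemma map_flip [DecidableEq I] (μ : Measure (I → Bool)) [IsProbabilityMeasure μ]
    (hcyl : ∀ (s : Finset I) (y : I → Bool), μ (cyl s y) = (1 / 2 : ENNReal) ^ s.card)
    (i : I) :
    Measure.map (fun x : I → Bool => Function.update x i (!x i)) μ = μ := by
  have hmeas := measurable_flip (I := I) i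
  haveI : IsProbabilityMeasure
      (Measure.map (fun x : I → Bool => Function.update x i (!x i)) μ) :=
    Measure.isProbabilityMeasure_map hmeas.aemeasurable
  refine ext_of_generate_finite _ pi_eq_generateFrom isPiSystem_cyl ?_ (by simp)
  rintro _ ⟨s, y, rfl⟩
  rw [Measure.map_apply hmeas (measurableSet_cyl s y)]
  have hpre : (fun x : I → Bool => Function.update x i (!x i)) ⁻¹' cyl s y
      = cyl s (Function.update y i (!y i)) := by
    ext x
    simp only [cyl, mem_preimage, mem_setOf_eq]
    refine forall₂_congr fun j hj => ?_
    by_cases hji : j = i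
    · subst hji
      simp only [Function.update_self]
      cases x j <;> cases y j <;> simp
    · simp [Function.update_of_ne hji]
  rw [hpre, hcyl, hcyl]

lemma flip_null [DecidableEq I] (μ : Measure (I → Bool)) [IsProbabilityMeasure μ]
    (hcyl : ∀ (s : Finset I) (y : I → Bool), μ (cyl s y) = (1 / 2 : ENNReal) ^ s.card)
    (i : I) {N : Set (I → Bool)} (hN : μ N = 0) :
    μ ((fun x : I → Bool => Function.update x i (!x i)) ⁻¹' N) = 0 := by
  obtain ⟨G, hNG, hGm, hGμ⟩ := exists_measurable_superset μ N
  have hG0 : μ G = 0 := by rw [hGμ, hN]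
  have key : μ ((fun x : I → Bool => Function.update x i (!x i)) ⁻¹' G) = 0 := by
    rw [← Measure.map_apply (measurable_flip i) hGm, map_flip μ hcyl i, hG0]
  exact measure_mono_null (preimage_mono hNG) key

/-- Every measurable set in the product of the null-measurable σ-algebras depends on
countably many coordinates in each factor, outside null sets. -/
lemma depends_prod (μ : Measure (I → Bool))
    {A : Set (NullMeasurableSpace (I → Bool) μ × NullMeasurableSpace (I → Bool) μ)}
    (hA : MeasurableSet A) :
    ∃ J : Set I, J.Countable ∧ ∃ N : Set (I → Bool), μ N = 0 ∧
      ∀ x x' y y' : I → Bool, x ∉ N → x' ∉ N → y ∉ N → y' ∉ N →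
        (∀ j ∈ J, x j = x' j) → (∀ j ∈ J, y j = y' j) →
        (((x, y) : NullMeasurableSpace (I → Bool) μ × NullMeasurableSpace (I → Bool) μ) ∈ A ↔
          ((x', y') : NullMeasurableSpace (I → Bool) μ × NullMeasurableSpace (I → Bool) μ) ∈ A) := by
  set P : Set (NullMeasurableSpace (I → Bool) μ × NullMeasurableSpace (I → Bool) μ) → Prop :=
    fun A => ∃ J : Set I, J.Countable ∧ ∃ N : Set (I → Bool), μ N = 0 ∧
      ∀ x x' y y' : I → Bool, x ∉ N → x' ∉ N → y ∉ N → y' ∉ N →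
        (∀ j ∈ J, x j = x' j) → (∀ j ∈ J, y j = y' j) →
        (((x, y) : NullMeasurableSpace (I → Bool) μ × NullMeasurableSpace (I → Bool) μ) ∈ A ↔
          ((x', y') : NullMeasurableSpace (I → Bool) μ × NullMeasurableSpace (I → Bool) μ) ∈ A)
    with hP
  have hcompl : ∀ A, P A → P Aᶜ := by
    rintro A ⟨J, hJ, N, hN, h⟩
    exact ⟨J, hJ, N, hN, fun x x' y y' hx hx' hy hy' h1 h2 =>
      not_congr (h x x' y y' hx hx' hy hy' h1 h2)⟩
  have hunion : ∀ f : ℕ → Set (NullMeasurableSpace (I → Bool) μ × NullMeasurableSpace (I → Bool) μ),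
      (∀ n, P (f n)) → P (⋃ n, f n) := by
    intro f hf
    choose J hJ N hN h using hf
    refine ⟨⋃ n, J n, countable_iUnion hJ, ⋃ n, N n, measure_iUnion_null hN,
      fun x x' y y' hx hx' hy hy' h1 h2 => ?_⟩
    simp only [mem_iUnion] at hx hx' hy hy' ⊢
    exact exists_congr fun n =>
      h n x x' y y' (fun c => hx ⟨n, c⟩) (fun c => hx' ⟨n, c⟩) (fun c => hy ⟨n, c⟩)
        (fun c => hy' ⟨n, c⟩)
        (fun j hj => h1 j (mem_iUnion.2 ⟨n, hj⟩)) (fun j hj => h2 j (mem_iUnion.2 ⟨n, hj⟩))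
  set m0 : MeasurableSpace (NullMeasurableSpace (I → Bool) μ × NullMeasurableSpace (I → Bool) μ) :=
    { MeasurableSet' := P
      measurableSet_empty := ⟨∅, countable_empty, ∅, measure_empty, by simp⟩
      measurableSet_compl := hcompl
      measurableSet_iUnion := hunion } with hm0
  have hle : (Prod.instMeasurableSpace :
      MeasurableSpace (NullMeasurableSpace (I → Bool) μ × NullMeasurableSpace (I → Bool) μ)) ≤ m0 := by
    have h1 : MeasurableSpace.comap
        (Prod.fst : NullMeasurableSpace (I → Bool) μ × NullMeasurableSpace (I → Bool) μ →
          NullMeasurableSpace (I → Bool) μ) inferInstance ≤ m0 := by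
      intro S hS
      obtain ⟨t, ht, rfl⟩ := MeasurableSpace.measurableSet_comap.mp hS
      obtain ⟨J, hJ, N, hN, hdep⟩ := depends_of_null (μ := μ) (B := t) ht
      exact ⟨J, hJ, N, hN, fun x x' y y' hx hx' hy hy' ha hb => hdep x x' hx hx' ha⟩
    have h2 : MeasurableSpace.comap
        (Prod.snd : NullMeasurableSpace (I → Bool) μ × NullMeasurableSpace (I → Bool) μ →
          NullMeasurableSpace (I → Bool) μ) inferInstance ≤ m0 := by
      intro S hS
      obtain ⟨t, ht, rfl⟩ := MeasurableSpace.measurableSet_comap.mp hS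
      obtain ⟨J, hJ, N, hN, hdep⟩ := depends_of_null (μ := μ) (B := t) ht
      exact ⟨J, hJ, N, hN, fun x x' y y' hx hx' hy hy' ha hb => hdep y y' hy hy' hb⟩
    exact sup_le h1 h2
  exact hle _ hA

end Stmt9Aux

open Stmt9Aux

/-- Let `I` have cardinality `2^ℵ₀`, let `X = {0,1}^I`, let `μ` be
the product of fair Bernoulli measures (characterized by its values on cylinder
sets), and let `𝒜` be the σ-algebra of `μ`-measurable sets, formalized as the
measurable space of `NullMeasurableSpace X μ`, whose measure is the completion
`μ.completion`.  The product σ-algebra `𝒜 ⊗ 𝒜` is the product measurable-space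
structure on `NullMeasurableSpace X μ × NullMeasurableSpace X μ`, and
`ν = β[μ]` is the pushforward of the (completed) measure under the diagonal map
`β(x) = (x, x)`.  The diagonal `D = {(x, x) : x ∈ X}` does not belong to the
`ν`-completion `Σ` of `𝒜 ⊗ 𝒜` (membership in `Σ` is formalized by
`NullMeasurableSet · ν`). -/
theorem stmt9 (I : Type) (hI : Cardinal.mk I = Cardinal.continuum)
    (μ : Measure (I → Bool)) (hprob : IsProbabilityMeasure μ)
    (hcyl : ∀ (s : Finset I) (y : I → Bool),
      μ {x : I → Bool | ∀ i ∈ s, x i = y i} = (1 / 2 : ENNReal) ^ s.card) :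
    ¬ NullMeasurableSet
        {p : NullMeasurableSpace (I → Bool) μ × NullMeasurableSpace (I → Bool) μ |
          p.1 = p.2}
        (Measure.map (fun x : NullMeasurableSpace (I → Bool) μ => (x, x))
          μ.completion) := by
  classical
  intro h
  have hcyl' : ∀ (s : Finset I) (y : I → Bool), μ (cyl s y) = (1 / 2 : ENNReal) ^ s.card :=
    hcyl
  set X := I → Bool with hX
  set β : NullMeasurableSpace X μ → NullMeasurableSpace X μ × NullMeasurableSpace X μ :=
    fun x => (x, x) with hβdef
  have hβ : Measurable β := measurable_id.prodMk measurable_id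
  set ν := Measure.map β μ.completion with hν
  set D : Set (NullMeasurableSpace X μ × NullMeasurableSpace X μ) := {p | p.1 = p.2} with hD
  -- extract a measurable hull
  have hA : toMeasurable ν D =ᵐ[ν] D := h.toMeasurable_ae_eq
  set A := toMeasurable ν D with hAdef
  have hAm : MeasurableSet A := measurableSet_toMeasurable ν D
  have hsymm := ae_eq_set.mp hA
  -- hsymm : ν (A \ D) = 0 ∧ ν (D \ A) = 0
  set G := toMeasurable ν (A \ D) ∪ toMeasurable ν (D \ A) with hGdef
  have hGm : MeasurableSet G :=
    (measurableSet_toMeasurable ν _).union (measurableSet_toMeasurable ν _)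
  have hGν : ν G = 0 := by
    apply measure_union_null <;> rw [measure_toMeasurable]
    · exact hsymm.1
    · exact hsymm.2
  have hADG : A \ D ⊆ G := (subset_toMeasurable ν _).trans subset_union_left
  have hDAG : D \ A ⊆ G := (subset_toMeasurable ν _).trans subset_union_right
  have hGμ : μ (β ⁻¹' G) = 0 := by
    have hmap : ν G = μ.completion (β ⁻¹' G) := Measure.map_apply hβ hGm
    change ν G = μ (β ⁻¹' G) at hmap
    rw [← hmap]; exact hGν
  -- the good set B
  set B := A \ G with hBdef
  have hBm : MeasurableSet B := hAm.diff hGm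
  have hBD : B ⊆ D := by
    rintro p ⟨hpA, hpG⟩
    by_contra hpD
    exact hpG (hADG ⟨hpA, hpD⟩)
  set E : Set X := β ⁻¹' B with hE
  have hEc : μ Eᶜ = 0 := by
    refine measure_mono_null ?_ hGμ
    intro x hx
    simp only [hE, mem_compl_iff, mem_preimage, hBdef, mem_diff, not_and, not_not] at hx
    by_cases hxA : β x ∈ A
    · by_contra hxG; exact hx ⟨hxA, hxG⟩
    · exact hDAG ⟨rfl, hxA⟩
  obtain ⟨J, hJ, N, hN, hdep⟩ := depends_prod μ hBm
  -- pick a coordinate outside J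
  have hIunc : ¬ (Set.univ : Set I).Countable := by
    rw [Set.countable_univ_iff]
    intro hc
    have h1 : Cardinal.mk I ≤ Cardinal.aleph0 := Cardinal.mk_le_aleph0
    rw [hI] at h1
    exact absurd h1 (not_le.mpr Cardinal.aleph0_lt_continuum)
  obtain ⟨i, hi⟩ : ∃ i, i ∉ J := by
    by_contra h'
    push_neg at h'
    exact hIunc (hJ.mono fun x _ => h' x)
  set σ : X → X := fun x => Function.update x i (!x i) with hσ
  have hbad : μ (Eᶜ ∪ (N ∪ σ ⁻¹' N)) = 0 :=
    measure_union_null hEc (measure_union_null hN (flip_null μ hcyl' i hN))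
  have hne : (Eᶜ ∪ (N ∪ σ ⁻¹' N))ᶜ.Nonempty := by
    rw [Set.nonempty_iff_ne_empty]
    intro hemp
    rw [compl_empty_iff] at hemp
    rw [hemp] at hbad
    have huniv : μ Set.univ = 1 := measure_univ
    rw [hbad] at huniv
    exact zero_ne_one huniv
  obtain ⟨x, hx⟩ := hne
  simp only [mem_compl_iff, mem_union, not_or, not_not] at hx
  obtain ⟨hxE, hxN, hxσN⟩ := hx
  have hxE' : ((x, x) : NullMeasurableSpace X μ × NullMeasurableSpace X μ) ∈ B := hxE
  have hagree : ∀ j ∈ J, x j = σ x j := by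
    intro j hj
    have hji : j ≠ i := fun hc => hi (hc ▸ hj)
    simp [hσ, Function.update_of_ne hji]
  have hmem : ((x, σ x) : NullMeasurableSpace X μ × NullMeasurableSpace X μ) ∈ B :=
    (hdep x x x (σ x) hxN hxN hxN hxσN (fun j _ => rfl) hagree).mp hxE'
  have heq : (x : NullMeasurableSpace X μ) = σ x := hBD hmem
  have : x i = σ x i := congrFun heq i
  simp only [hσ, Function.update_self] at this
  exact (Bool.eq_not_self (x i)).mp this
end

section
/- Let E be the dual of the Banach space C(X, ℝ) of continuous real-valued functions on X, equipped with the weak* topology, let e : X → E be the canonical evaluation embedding e(x)(φ) = φ(x), let (Ω, Σ, P) be the completion of (X × X, 𝒜 ⊗ 𝒜, ν), and set f = e ∘ π₁ and g = −(e ∘ π₂). Then: (a) f⁻¹(B), g⁻¹(B) ∈ Σ for every Borel set B ⊆ E; (b) the image measures f[P] and g[P] are Radon (in particular inner regular with respect to compact sets); and (c) the function h = f + g satisfies h⁻¹({0}) = D and h⁻¹({0}) ∉ Σ. -/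
open MeasureTheory Set
open scoped Classical

/-- The canonical evaluation embedding `e : X → E` of `X = {0,1}^I` into the
dual `E` of the Banach space `C(X, ℝ)` equipped with the weak* topology,
`e(x)(φ) = φ(x)`. -/
noncomputable def diracEmb (I : Type) :
    (I → Bool) → WeakDual ℝ C(I → Bool, ℝ) :=
  fun x => ContinuousMap.evalCLM ℝ x

/-- The measure `ν = β[μ]` on `𝒜 ⊗ 𝒜`: the pushforward of (the completion of)
`μ` under the diagonal map `β(x) = (x, x)`.  Here `𝒜`, the σ-algebra of
`μ`-measurable sets, is the measurable-space structure of
`NullMeasurableSpace X μ`, and `𝒜 ⊗ 𝒜` is the product measurable-space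
structure on the product type. -/
noncomputable def nuMeas {I : Type} (μ : Measure (I → Bool)) :
    Measure (NullMeasurableSpace (I → Bool) μ × NullMeasurableSpace (I → Bool) μ) :=
  Measure.map (fun x => (x, x)) μ.completion

/-- `f = e ∘ π₁`, viewed as a map on `Ω`, the completion
`NullMeasurableSpace (X × X) ν` of `(X × X, 𝒜 ⊗ 𝒜, ν)`. -/
noncomputable def fFun {I : Type} (μ : Measure (I → Bool)) :
    NullMeasurableSpace
      (NullMeasurableSpace (I → Bool) μ × NullMeasurableSpace (I → Bool) μ)
      (nuMeas μ) →
    WeakDual ℝ C(I → Bool, ℝ) :=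
  fun ω => diracEmb I
    ((ω : NullMeasurableSpace (I → Bool) μ × NullMeasurableSpace (I → Bool) μ).1)

/-- `g = -(e ∘ π₂)`, viewed as a map on `Ω`, the completion
`NullMeasurableSpace (X × X) ν` of `(X × X, 𝒜 ⊗ 𝒜, ν)`. -/
noncomputable def gFun {I : Type} (μ : Measure (I → Bool)) :
    NullMeasurableSpace
      (NullMeasurableSpace (I → Bool) μ × NullMeasurableSpace (I → Bool) μ)
      (nuMeas μ) →
    WeakDual ℝ C(I → Bool, ℝ) :=
  fun ω => - diracEmb I
    ((ω : NullMeasurableSpace (I → Bool) μ × NullMeasurableSpace (I → Bool) μ).2)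

namespace Stmt10

variable {I : Type}

def cylSet (s : Finset I) (y : I → Bool) : Set (I → Bool) := {x | ∀ i ∈ s, x i = y i}

/-- cylinders with base in `K` -/
def cylK (K : Set I) : Set (Set (I → Bool)) :=
  {T | ∃ (s : Finset I) (y : I → Bool), ↑s ⊆ K ∧ T = cylSet s y}

lemma cylSet_inter_eq {s s' : Finset I} {y y' : I → Bool}
    (hcons : ∀ i, i ∈ s → i ∈ s' → y i = y' i) :
    cylSet s y ∩ cylSet s' y' = cylSet (s ∪ s') (fun i => if i ∈ s then y i else y' i) := by
  ext x
  simp only [cylSet, mem_inter_iff, mem_setOf_eq, Finset.mem_union]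
  constructor
  · rintro ⟨h1, h2⟩ i hi
    by_cases hs : i ∈ s
    · simp [hs, h1 i hs]
    · simp only [hs, if_false]
      exact h2 i (hi.resolve_left hs)
  · intro h
    constructor
    · intro i hi
      have := h i (Or.inl hi); simpa [hi] using this
    · intro i hi
      have := h i (Or.inr hi)
      by_cases hs : i ∈ s
      · simpa [hs, ← hcons i hs hi] using this
      · simpa [hs] using this

lemma isPiSystem_cylK (K : Set I) : IsPiSystem (cylK K) := by
  rintro T ⟨s, y, hsK, rfl⟩ T' ⟨s', y', hsK', rfl⟩ hne
  obtain ⟨z, hz1, hz2⟩ := hne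
  have hcons : ∀ i, i ∈ s → i ∈ s' → y i = y' i := fun i hi hi' =>
    (hz1 i hi).symm.trans (hz2 i hi')
  rw [cylSet_inter_eq hcons]
  exact ⟨s ∪ s', _, by simp [Finset.coe_union, union_subset_iff, hsK, hsK'], rfl⟩

lemma measurableSet_cylSet_cylEvents {K : Set I} {s : Finset I} (hs : ↑s ⊆ K) (y : I → Bool) :
    MeasurableSet[MeasureTheory.cylinderEvents K] (cylSet s y) := by
  have : cylSet s y = ⋂ i ∈ s, (fun x : I → Bool => x i) ⁻¹' {y i} := by
    ext x; simp [cylSet]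
  rw [this]
  exact MeasurableSet.biInter s.countable_toSet fun i hi =>
    measurable_cylinderEvent_apply (hs hi) (MeasurableSet.singleton (y i))

lemma generateFrom_cylK (K : Set I) :
    MeasurableSpace.generateFrom (cylK K) = MeasureTheory.cylinderEvents K := by
  apply le_antisymm
  · exact MeasurableSpace.generateFrom_le fun T hT => by
      obtain ⟨s, y, hsK, rfl⟩ := hT
      exact measurableSet_cylSet_cylEvents hsK y
  · rw [MeasureTheory.cylinderEvents]
    refine iSup₂_le fun i hi => ?_
    rintro S ⟨S', -, rfl⟩
    have : (fun x : I → Bool => x i) ⁻¹' S' = ⋃ b ∈ S', cylSet {i} (fun _ => b) := by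
      ext x; simp [cylSet]
    rw [this]
    exact MeasurableSet.biUnion S'.to_countable fun b _ =>
      MeasurableSpace.measurableSet_generateFrom ⟨{i}, fun _ => b, by simpa using hi, rfl⟩

lemma generateFrom_cylK_univ :
    MeasurableSpace.generateFrom (cylK (Set.univ : Set I)) = MeasurableSpace.pi := by
  rw [generateFrom_cylK, cylinderEvents_univ]

lemma measurableSet_cylSet (s : Finset I) (y : I → Bool) :
    MeasurableSet (cylSet s y) :=
  cylinderEvents_le_pi _ (measurableSet_cylSet_cylEvents (K := Set.univ) (subset_univ _) y)

lemma isClosed_cylSet (s : Finset I) (y : I → Bool) : IsClosed (cylSet s y) := by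
  have : cylSet s y = ⋂ i ∈ s, (fun x : I → Bool => x i) ⁻¹' {y i} := by
    ext x; simp [cylSet]
  rw [this]
  exact isClosed_biInter fun i hi => (IsClosed.preimage (continuous_apply i) (isClosed_discrete _))

lemma isOpen_cylSet (s : Finset I) (y : I → Bool) : IsOpen (cylSet s y) := by
  have : cylSet s y = ⋂ i ∈ s, (fun x : I → Bool => x i) ⁻¹' {y i} := by
    ext x; simp [cylSet]
  rw [this]
  exact isOpen_biInter_finset fun i hi => (IsOpen.preimage (continuous_apply i) (isOpen_discrete _))

-- basic facts
lemma cylSet_anti {s t : Finset I} (h : s ⊆ t) (y : I → Bool) : cylSet t y ⊆ cylSet s y :=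
  fun x hx i hi => hx i (h hi)

lemma exists_basic_of_isOpen {U : Set (I → Bool)} (hU : IsOpen U) {x : I → Bool} (hx : x ∈ U) :
    ∃ s : Finset I, x ∈ cylSet s x ∧ cylSet s x ⊆ U := by
  obtain ⟨s, u, hu, hsub⟩ := (isOpen_pi_iff.1 hU) x hx
  refine ⟨s, fun i _ => rfl, ?_⟩
  intro z hz
  apply hsub
  intro i hi
  have := hz i hi
  rw [this]
  exact (hu i hi).2

noncomputable def flipAt (i : I) : (I → Bool) → (I → Bool) := fun x => Function.update x i (!x i)

lemma measurable_flipAt (i : I) : Measurable (flipAt i) := by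
  apply measurable_pi_iff.2
  intro j
  by_cases h : j = i
  · subst h
    have : (fun x : I → Bool => flipAt j x j) = fun x => !(x j) := by
      funext x; simp [flipAt]
    rw [this]
    exact (Measurable.of_discrete (f := not)).comp (measurable_pi_apply j)
  · have : (fun x : I → Bool => flipAt i x j) = fun x => x j := by
      funext x; simp [flipAt, Function.update_of_ne h]
    rw [this]
    exact measurable_pi_apply j

lemma flipAt_preimage_cylSet (i : I) (s : Finset I) (y : I → Bool) :
    flipAt i ⁻¹' cylSet s y = cylSet s (Function.update y i (!y i)) := by
  ext x
  simp only [cylSet, mem_preimage, mem_setOf_eq, flipAt]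
  refine forall₂_congr fun j hj => ?_
  by_cases hji : j = i
  · subst hji
    simp only [Function.update_self]
    cases hx : x j <;> cases hy : y j <;> simp
  · simp [Function.update_of_ne hji]

section Reduction
variable {α : Type} [mα : MeasurableSpace α]

lemma exists_countable_rectangles {W : Set (α × α)} (hW : MeasurableSet W) :
    ∃ R : ℕ → Set (α × α),
      (∀ n, (∃ A, MeasurableSet A ∧ R n = Prod.fst ⁻¹' A) ∨
            (∃ B, MeasurableSet B ∧ R n = Prod.snd ⁻¹' B)) ∧
      MeasurableSet[MeasurableSpace.generateFrom (Set.range R)] W := by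
  set gen : Set (α × α) → Prop := fun S =>
    (∃ A, MeasurableSet A ∧ S = Prod.fst ⁻¹' A) ∨
    (∃ B, MeasurableSet B ∧ S = Prod.snd ⁻¹' B) with hgen
  set m' : MeasurableSpace (α × α) :=
    { MeasurableSet' := fun W => ∃ R : ℕ → Set (α × α), (∀ n, gen (R n)) ∧
        MeasurableSet[MeasurableSpace.generateFrom (Set.range R)] W
      measurableSet_empty := ⟨fun _ => Prod.fst ⁻¹' univ,
        fun _ => Or.inl ⟨univ, MeasurableSet.univ, rfl⟩,
        @MeasurableSet.empty _ (MeasurableSpace.generateFrom _)⟩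
      measurableSet_compl := fun W ⟨R, hR, hWm⟩ => ⟨R, hR, hWm.compl⟩
      measurableSet_iUnion := fun f hf => by
        choose R hRgen hRm using hf
        refine ⟨fun n => R ((Denumerable.eqv (ℕ × ℕ)).symm n).1
          ((Denumerable.eqv (ℕ × ℕ)).symm n).2, fun n => hRgen _ _, ?_⟩
        refine MeasurableSet.iUnion fun k => ?_
        refine MeasurableSpace.generateFrom_mono ?_ _ (hRm k)
        rintro S ⟨j, rfl⟩
        exact ⟨(Denumerable.eqv (ℕ × ℕ)) (k, j), by simp⟩ } with hm'
  have hle : (Prod.instMeasurableSpace : MeasurableSpace (α × α)) ≤ m' := by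
    refine sup_le ?_ ?_
    · rintro S ⟨A, hA, rfl⟩
      exact ⟨fun _ => Prod.fst ⁻¹' A, fun _ => Or.inl ⟨A, hA, rfl⟩,
        MeasurableSpace.measurableSet_generateFrom ⟨0, rfl⟩⟩
    · rintro S ⟨B, hB, rfl⟩
      exact ⟨fun _ => Prod.snd ⁻¹' B, fun _ => Or.inr ⟨B, hB, rfl⟩,
        MeasurableSpace.measurableSet_generateFrom ⟨0, rfl⟩⟩
  exact hle W hW

end Reduction

lemma exists_countable_coords {E : Set (I → Bool)} (hE : MeasurableSet E) :
    ∃ J : Set I, J.Countable ∧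
      ∀ x x' : I → Bool, (∀ i ∈ J, x i = x' i) → (x ∈ E ↔ x' ∈ E) := by
  set m' : MeasurableSpace (I → Bool) :=
    { MeasurableSet' := fun E => ∃ J : Set I, J.Countable ∧
        ∀ x x' : I → Bool, (∀ i ∈ J, x i = x' i) → (x ∈ E ↔ x' ∈ E)
      measurableSet_empty := ⟨∅, countable_empty, fun _ _ _ => Iff.rfl⟩
      measurableSet_compl := fun E ⟨J, hJ, h⟩ =>
        ⟨J, hJ, fun x x' hxx => not_congr (h x x' hxx)⟩
      measurableSet_iUnion := fun f hf => by
        choose J hJc hJ using hf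
        refine ⟨⋃ n, J n, countable_iUnion hJc, fun x x' hxx => ?_⟩
        simp only [mem_iUnion]
        exact exists_congr fun n => hJ n x x' fun i hi => hxx i (mem_iUnion.2 ⟨n, hi⟩) } with hm'
  have hle : (MeasurableSpace.pi : MeasurableSpace (I → Bool)) ≤ m' := by
    have hpi : (MeasurableSpace.pi : MeasurableSpace (I → Bool)) =
        ⨆ i : I, MeasurableSpace.comap (fun x : I → Bool => x i) inferInstance := rfl
    rw [hpi]
    refine iSup_le fun i => ?_
    rintro S ⟨S', -, rfl⟩
    refine ⟨{i}, countable_singleton i, fun x x' hxx => ?_⟩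
    simp only [mem_preimage]
    rw [hxx i (mem_singleton i)]
  exact hle E hE

lemma continuous_diracEmb : Continuous (diracEmb I) :=
  WeakDual.continuous_of_continuous_eval fun φ => φ.continuous

lemma injective_diracEmb : Function.Injective (diracEmb I) := by
  intro x y hxy
  by_contra hne
  obtain ⟨i, hi⟩ : ∃ i, x i ≠ y i := by
    by_contra h
    push_neg at h
    exact hne (funext h)
  have hφc : Continuous (fun z : I → Bool => if z i then (1:ℝ) else 0) := by
    have : (fun z : I → Bool => if z i then (1:ℝ) else 0) =
        (fun b : Bool => if b then (1:ℝ) else 0) ∘ (fun z : I → Bool => z i) :=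
      rfl
    rw [this]
    exact Continuous.comp (continuous_of_discreteTopology) (continuous_apply i)
  set φ : C(I → Bool, ℝ) := ⟨fun z => if z i then (1:ℝ) else 0, hφc⟩ with hφ
  have := congrArg (fun T : WeakDual ℝ C(I → Bool, ℝ) => T φ) hxy
  simp only [hφ] at this
  have hx : diracEmb I x φ = if x i then (1:ℝ) else 0 := rfl
  have hy : diracEmb I y φ = if y i then (1:ℝ) else 0 := rfl
  rw [hx, hy] at this
  cases hxb : x i <;> cases hyb : y i <;> rw [hxb, hyb] at this <;> simp_all

/-- two probability measures agreeing on cylinders agree -/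
lemma ext_of_cylSet (μ₁ μ₂ : Measure (I → Bool)) [IsProbabilityMeasure μ₁]
    [IsProbabilityMeasure μ₂] (h : ∀ s y, μ₁ (cylSet s y) = μ₂ (cylSet s y)) : μ₁ = μ₂ := by
  refine ext_of_generate_finite (cylK (Set.univ : Set I)) generateFrom_cylK_univ.symm
    (isPiSystem_cylK _) ?_ (by simp)
  rintro T ⟨s, y, -, rfl⟩
  exact h s y

lemma measurable_beta (μ : Measure (I → Bool)) :
    Measurable (fun x : NullMeasurableSpace (I → Bool) μ => (x, x)) :=
  measurable_id.prodMk measurable_id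

variable (μ : Measure (I → Bool))
variable (hcyl : ∀ (s : Finset I) (y : I → Bool),
      μ {x : I → Bool | ∀ i ∈ s, x i = y i} = (1 / 2 : ENNReal) ^ s.card)

include hcyl in
lemma cylSet_meas (s : Finset I) (y : I → Bool) :
    μ (cylSet s y) = (1 / 2 : ENNReal) ^ s.card := hcyl s y

include hcyl in
/-- independence of a `cylinderEvents K`-measurable set from a cylinder disjoint from K -/
lemma indep_cylinder [IsProbabilityMeasure μ] (K : Set I) (A : Set (I → Bool))
    (hA : MeasurableSet[MeasureTheory.cylinderEvents K] A) (s : Finset I) (y : I → Bool)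
    (hdisj : ∀ i ∈ s, i ∉ K) :
    μ (A ∩ cylSet s y) = μ A * μ (cylSet s y) := by
  set B := cylSet s y with hB
  have hle : MeasureTheory.cylinderEvents (X := fun _ : I => Bool) K ≤ (MeasurableSpace.pi) :=
    MeasureTheory.cylinderEvents_le_pi
  haveI : IsFiniteMeasure ((μ B) • μ) := by
    constructor
    rw [Measure.smul_apply, smul_eq_mul, measure_univ, mul_one]
    exact (measure_lt_top μ B)
  have key : (μ.restrict B).trim hle = ((μ B) • μ).trim hle := by
    refine @ext_of_generate_finite _ (MeasureTheory.cylinderEvents K) _ _ (cylK K)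
      (generateFrom_cylK K).symm (isPiSystem_cylK K) (isFiniteMeasure_trim hle) ?_ ?_
    · rintro T ⟨t, y', htK, rfl⟩
      have htm : MeasurableSet[MeasureTheory.cylinderEvents K] (cylSet t y') :=
        measurableSet_cylSet_cylEvents htK y'
      have hdisj' : ∀ i, i ∈ t → i ∈ s → y' i = y i := by
        intro i hit his
        exact absurd (htK hit) (hdisj i his)
      have hcap : cylSet t y' ∩ B = cylSet (t ∪ s) (fun i => if i ∈ t then y' i else y i) :=
        cylSet_inter_eq hdisj'
      have hdisj'' : Disjoint t s := by
        rw [Finset.disjoint_left]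
        intro i hit his
        exact (hdisj i his) (htK hit)
      rw [trim_measurableSet_eq hle htm, trim_measurableSet_eq hle htm,
        Measure.restrict_apply (hle _ htm), hcap, Measure.smul_apply, smul_eq_mul,
        cylSet_meas μ hcyl, cylSet_meas μ hcyl, cylSet_meas μ hcyl,
        Finset.card_union_of_disjoint hdisj'', pow_add, mul_comm]
    · rw [trim_measurableSet_eq hle MeasurableSet.univ,
        trim_measurableSet_eq hle MeasurableSet.univ, Measure.restrict_apply MeasurableSet.univ,
        Set.univ_inter, Measure.smul_apply, smul_eq_mul, measure_univ, mul_one]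
  have h2 := congrArg (fun ν : @Measure _ (MeasureTheory.cylinderEvents K) => ν A) key
  simp only [trim_measurableSet_eq hle hA] at h2
  rw [Measure.restrict_apply (hle _ hA), Measure.smul_apply, smul_eq_mul] at h2
  rw [h2, mul_comm]

include hcyl in
lemma nullMeasurableSet_of_isOpen [IsProbabilityMeasure μ] {U : Set (I → Bool)}
    (hU : IsOpen U) : NullMeasurableSet U μ := by
  rcases U.eq_empty_or_nonempty with rfl | ⟨x₀, hx₀⟩
  · exact (MeasurableSet.empty).nullMeasurableSet
  -- the family of basic cylinders inside U
  set P := {p : Finset I × (I → Bool) | cylSet p.1 p.2 ⊆ U} with hP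
  have hPne : Nonempty P := by
    obtain ⟨s, -, hsub⟩ := exists_basic_of_isOpen hU hx₀
    exact ⟨⟨(s, x₀), hsub⟩⟩
  set c : P → Set (I → Bool) := fun p => cylSet p.1.1 p.1.2 with hc
  have hcm : ∀ p : P, MeasurableSet (c p) := fun p => measurableSet_cylSet _ _
  set m := ⨆ V : ℕ → P, μ (⋃ n, c (V n)) with hm
  -- attain the sup
  have hstep : ∀ ε : ENNReal, ε ≠ 0 → ∃ V : ℕ → P, m ≤ μ (⋃ n, c (V n)) + ε := by
    intro ε hε
    rcases eq_or_ne m 0 with h0 | h0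
    · exact ⟨fun _ => hPne.some, by simp [h0]⟩
    · have hmlt : m - ε < m := by
        apply ENNReal.sub_lt_self _ h0 hε
        exact ne_top_of_le_ne_top (by simp) (iSup_le fun V => prob_le_one)
      obtain ⟨V, hV⟩ := lt_iSup_iff.1 hmlt
      exact ⟨V, tsub_le_iff_right.1 hV.le⟩
  have hchoice : ∀ k : ℕ, ∃ V : ℕ → P, m ≤ μ (⋃ n, c (V n)) + (↑(k+1) : ENNReal)⁻¹ := by
    intro k
    exact hstep _ (by simp)
  choose Vk hVk using hchoice
  set eqv := (Denumerable.eqv (ℕ × ℕ)).symm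
  set W : ℕ → P := fun n => Vk (eqv n).1 (eqv n).2 with hW
  set V : Set (I → Bool) := ⋃ n, c (W n) with hV
  have hVmeas : MeasurableSet V := MeasurableSet.iUnion fun n => hcm _
  have hVsub : V ⊆ U := by
    refine iUnion_subset fun n => ?_
    exact (W n).2
  have hVm : μ V = m := by
    apply le_antisymm
    · exact le_iSup (fun (V' : ℕ → P) => μ (⋃ n, c (V' n))) W
    · apply ENNReal.le_of_forall_pos_le_add
      intro ε hε hfin
      obtain ⟨k, hk⟩ := ENNReal.exists_inv_nat_lt (ENNReal.coe_ne_zero.2 hε.ne')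
      calc m ≤ μ (⋃ n, c (Vk k n)) + (↑(k+1) : ENNReal)⁻¹ := hVk k
        _ ≤ μ V + ↑ε := by
            refine add_le_add (measure_mono (iUnion_subset fun n => ?_)) (le_trans ?_ hk.le)
            · have h1 : Vk k n = W (eqv.symm (k, n)) := by simp [hW]
              rw [h1]
              exact subset_iUnion (fun j => c (W j)) _
            · gcongr
              exact_mod_cast Nat.le_succ k
  -- every basic cylinder inside U is a.e. inside V
  have hnull : ∀ p : P, μ (c p \ V) = 0 := by
    intro p
    have hunion : μ (V ∪ (c p \ V)) ≤ m := by
      rw [union_diff_self]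
      set W' : ℕ → P := fun n => Nat.rec p (fun k _ => W k) n with hW'
      have : V ∪ c p ⊆ ⋃ n, c (W' n) := by
        rintro z (hz | hz)
        · obtain ⟨_, ⟨n, rfl⟩, hzn⟩ := hz
          exact mem_iUnion.2 ⟨n+1, hzn⟩
        · exact mem_iUnion.2 ⟨0, hz⟩
      calc μ (V ∪ c p) ≤ μ (⋃ n, c (W' n)) := measure_mono this
        _ ≤ m := le_iSup (fun (V' : ℕ → P) => μ (⋃ n, c (V' n))) W'
    rw [measure_union (disjoint_sdiff_self_right) ((hcm p).diff hVmeas), hVm] at hunion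
    rw [← hVm] at hunion
    have h' : μ V + μ (c p \ V) ≤ μ V + 0 := by simpa using hunion
    simpa using (ENNReal.add_le_add_iff_left (measure_ne_top μ V)).1 h'
  -- the countable coordinate set supporting V
  set K : Set I := ⋃ n, ((W n).1.1 : Set I) with hK
  have hKc : K.Countable := countable_iUnion fun n => (W n).1.1.countable_toSet
  have hVK : MeasurableSet[MeasureTheory.cylinderEvents K] V :=
    MeasurableSet.iUnion fun n => measurableSet_cylSet_cylEvents
      (subset_iUnion (fun j => (((W j).1.1 : Finset I) : Set I)) n) _
  -- key: for a basic cylinder (s,y) ⊆ U, its K-part minus V is null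
  have hkey : ∀ (s : Finset I) (y : I → Bool), cylSet s y ⊆ U →
      μ (cylSet (s.filter (fun i => i ∈ K)) y \ V) = 0 := by
    intro s y hsub
    set t := s.filter (fun i => i ∈ K) with hdeft
    set s' := s.filter (fun i => i ∉ K) with hdefs'
    have hts : t ∪ s' = s := Finset.filter_union_filter_not_eq _ s
    have heq : cylSet s y \ V = (cylSet t y \ V) ∩ cylSet s' y := by
      rw [← hts]; ext x
      constructor
      · rintro ⟨h1, h2⟩
        exact ⟨⟨fun i hi => h1 i (Finset.mem_union_left _ hi), h2⟩,
          fun i hi => h1 i (Finset.mem_union_right _ hi)⟩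
      · rintro ⟨⟨h1, h2⟩, h3⟩
        refine ⟨fun i hi => ?_, h2⟩
        rcases Finset.mem_union.1 hi with h | h
        · exact h1 i h
        · exact h3 i h
    have h0 : μ (cylSet s y \ V) = 0 := hnull ⟨(s,y), hsub⟩
    have htK : (↑t : Set I) ⊆ K := by
      intro i hi
      exact (Finset.mem_filter.1 hi).2
    have hA : MeasurableSet[MeasureTheory.cylinderEvents K] (cylSet t y \ V) :=
      (measurableSet_cylSet_cylEvents htK y).diff hVK
    have hindep := indep_cylinder μ hcyl K _ hA s' y (fun i hi => (Finset.mem_filter.1 hi).2)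
    rw [heq, hindep] at h0
    rcases mul_eq_zero.1 h0 with h | h
    · exact h
    · exfalso
      have hval := hcyl s' y
      rw [show {x : I → Bool | ∀ i ∈ s', x i = y i} = cylSet s' y from rfl, h] at hval
      exact (pow_ne_zero _ (by norm_num : (1/2 : ENNReal) ≠ 0)) hval.symm
  -- countable family of null remainders
  haveI : Countable ↥K := hKc.to_subtype
  set real : (Σ t : Finset ↥K, ({b : ↥K // b ∈ t} → Bool)) → Set (I → Bool) :=
    fun a => {x | ∀ (b : ↥K) (h : b ∈ a.1), x ↑b = a.2 ⟨b, h⟩} with hreal'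
  have hrealm : ∀ a, MeasurableSet (real a) := by
    intro a
    have : real a = ⋂ (b : ↥K), ⋂ (h : b ∈ a.1), (fun x : I → Bool => x ↑b) ⁻¹' {a.2 ⟨b, h⟩} := by
      ext x; simp [hreal']
    rw [this]
    exact MeasurableSet.iInter fun b => MeasurableSet.iInter fun h =>
      (measurable_pi_apply _ (measurableSet_singleton _))
  set N : Set (I → Bool) := ⋃ (a) (_ : μ (real a \ V) = 0), (real a \ V) with hN
  have hNnull : μ N = 0 := by
    refine measure_iUnion_null fun a => ?_
    by_cases h : μ (real a \ V) = 0
    · simpa [h] using h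
    · simp [h]
  have hcover : U ⊆ V ∪ N := by
    intro x hx
    obtain ⟨s, hxs, hsub⟩ := exists_basic_of_isOpen hU hx
    by_cases hxV : x ∈ V
    · exact Or.inl hxV
    right
    set t := s.filter (fun i => i ∈ K) with hdeft
    have htK : (↑t : Set I) ⊆ K := fun i hi => (Finset.mem_filter.1 hi).2
    have h0 : μ (cylSet t x \ V) = 0 := hkey s x hsub
    have hra : real ⟨t.subtype (fun i => i ∈ K), fun b => x ↑↑b⟩ = cylSet t x := by
      ext z
      simp only [hreal', mem_setOf_eq, Finset.mem_subtype, cylSet]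
      constructor
      · intro h i hi
        exact h ⟨i, htK hi⟩ (by simpa using hi)
      · intro h b hb
        exact h ↑b (by simpa using hb)
    refine mem_iUnion.2 ⟨⟨t.subtype (fun i => i ∈ K), fun b => x ↑↑b⟩,
      mem_iUnion.2 ⟨by rw [hra]; exact h0, ⟨?_, hxV⟩⟩⟩
    rw [hra]
    exact cylSet_anti (Finset.filter_subset _ s) x hxs
  have h1 : μ (U \ V) = 0 :=
    measure_mono_null (fun x hx => ((hcover hx.1).resolve_left hx.2)) hNnull
  have h2 : μ (V \ U) = 0 := by
    rw [diff_eq_empty.2 hVsub]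
    exact measure_empty
  exact NullMeasurableSet.congr hVmeas.nullMeasurableSet (ae_eq_set.2 ⟨h2, h1⟩)

/-- closed measurable inner approximation -/
def IA (A : Set (I → Bool)) : Prop :=
  ∀ ε : ENNReal, ε ≠ 0 → ∃ F, IsClosed F ∧ MeasurableSet F ∧ F ⊆ A ∧ μ A ≤ μ F + ε

lemma diff_le_of_IA [IsProbabilityMeasure μ] {A F : Set (I → Bool)} {δ : ENNReal}
    (hsub : F ⊆ A) (hFm : MeasurableSet F) (hle : μ A ≤ μ F + δ) : μ (A \ F) ≤ δ := by
  rw [measure_diff hsub hFm.nullMeasurableSet (measure_ne_top μ _)]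
  rw [tsub_le_iff_right, add_comm]
  exact hle

lemma IA_of_measurable [IsProbabilityMeasure μ] {A : Set (I → Bool)} (hA : MeasurableSet A) :
    IA μ A := by
  have key : ∀ A : Set (I → Bool), MeasurableSet[MeasurableSpace.generateFrom
      (cylK (Set.univ : Set I))] A → IA μ A ∧ IA μ Aᶜ := by
    refine fun A' hA' => MeasurableSpace.generateFrom_induction (C := cylK (Set.univ : Set I))
      (p := fun s _ => IA μ s ∧ IA μ sᶜ) ?_ ?_ ?_ ?_ A' hA'
    · rintro t ⟨s, y, -, rfl⟩ _
      constructor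
      · intro ε hε
        exact ⟨cylSet s y, isClosed_cylSet s y, measurableSet_cylSet s y, subset_rfl,
          le_add_right le_rfl⟩
      · intro ε hε
        exact ⟨(cylSet s y)ᶜ, (isOpen_cylSet s y).isClosed_compl,
          (measurableSet_cylSet s y).compl, subset_rfl, le_add_right le_rfl⟩
    · constructor
      · intro ε hε
        exact ⟨∅, isClosed_empty, MeasurableSet.empty, subset_rfl, le_add_right le_rfl⟩
      · intro ε hε
        exact ⟨Set.univ, isClosed_univ, MeasurableSet.univ, by simp,
          le_add_right (measure_mono (subset_univ _))⟩
    · rintro t ht iht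
      exact ⟨iht.2, by simpa [compl_compl] using iht.1⟩
    · rintro f hf ihf
      have hfm : ∀ n, MeasurableSet (f n) := fun n => by
        have := hf n; rwa [generateFrom_cylK_univ] at this
      constructor
      · -- union case
        intro ε hε
        obtain ⟨δ, hδpos, hδsum⟩ := ENNReal.exists_pos_sum_of_countable'
          (ENNReal.half_pos hε).ne' ℕ
        choose F hFc hFm hFsub hFle using fun n => (ihf n).1 (δ n) (hδpos n).ne'
        have htend := tendsto_measure_iUnion_accumulate (μ := μ) (f := f)
        have hk : ∃ k, μ (⋃ n, f n) ≤ μ (accumulate f k) + ε/2 := by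
          rcases eq_or_ne (μ (⋃ n, f n)) 0 with h0 | h0
          · exact ⟨0, by simp [h0]⟩
          · have hlt : μ (⋃ n, f n) - ε/2 < μ (⋃ n, f n) :=
              ENNReal.sub_lt_self (measure_ne_top μ _) h0 (ENNReal.half_pos hε).ne'
            obtain ⟨k, hk⟩ := ((tendsto_order.1 htend).1 _ hlt).exists
            exact ⟨k, tsub_le_iff_right.1 hk.le⟩
        obtain ⟨k, hk⟩ := hk
        set F' := ⋃ n ∈ Finset.range (k+1), F n with hF'
        have hF'c : IsClosed F' :=
          Set.Finite.isClosed_biUnion (Finset.range (k+1)).finite_toSet fun n _ => hFc n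
        have hF'm : MeasurableSet F' :=
          MeasurableSet.biUnion (Finset.range (k+1)).countable_toSet fun n _ => hFm n
        refine ⟨F', hF'c, hF'm, iUnion₂_subset fun n _ => (hFsub n).trans (subset_iUnion f n), ?_⟩
        have hsub : accumulate f k \ F' ⊆ ⋃ n ∈ Finset.range (k+1), (f n \ F n) := by
          rintro z ⟨hzA, hzF⟩
          obtain ⟨n, hnk, hzn⟩ := mem_iUnion₂.1 hzA
          refine mem_iUnion₂.2 ⟨n, Finset.mem_range.2 (Nat.lt_succ_of_le hnk), hzn, fun hzFn => ?_⟩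
          exact hzF (mem_iUnion₂.2 ⟨n, Finset.mem_range.2 (Nat.lt_succ_of_le hnk), hzFn⟩)
        have h1 : μ (accumulate f k \ F') ≤ ∑' n, δ n := by
          refine le_trans (measure_mono hsub) ?_
          refine le_trans (measure_biUnion_finset_le _ _) ?_
          refine le_trans (Finset.sum_le_sum fun n _ => diff_le_of_IA μ (hFsub n) (hFm n) (hFle n)) ?_
          exact ENNReal.sum_le_tsum _
        calc μ (⋃ n, f n) ≤ μ (accumulate f k) + ε/2 := hk
          _ ≤ (μ F' + μ (accumulate f k \ F')) + ε/2 := by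
              refine add_le_add_left ?_ _
              refine le_trans (measure_mono fun z hz => ?_) (measure_union_le F' _)
              by_cases hzF : z ∈ F'
              · exact Or.inl hzF
              · exact Or.inr ⟨hz, hzF⟩
          _ ≤ (μ F' + ε/2) + ε/2 :=
              add_le_add_left (add_le_add_right (h1.trans hδsum.le) _) _
          _ = μ F' + ε := by rw [add_assoc, ENNReal.add_halves]
      · -- intersection case
        intro ε hε
        obtain ⟨δ, hδpos, hδsum⟩ := ENNReal.exists_pos_sum_of_countable' hε ℕ
        choose F hFc hFm hFsub hFle using fun n => (ihf n).2 (δ n) (hδpos n).ne'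
        refine ⟨⋂ n, F n, isClosed_iInter hFc, MeasurableSet.iInter hFm, ?_, ?_⟩
        · rw [compl_iUnion]
          exact iInter_mono hFsub
        have hsub : (⋃ n, f n)ᶜ \ (⋂ n, F n) ⊆ ⋃ n, ((f n)ᶜ \ F n) := by
          rintro z ⟨hz1, hz2⟩
          obtain ⟨n, hn⟩ := not_forall.1 (fun h => hz2 (mem_iInter.2 h))
          rw [compl_iUnion, mem_iInter] at hz1
          exact mem_iUnion.2 ⟨n, hz1 n, hn⟩
        have h1 : μ ((⋃ n, f n)ᶜ \ ⋂ n, F n) ≤ ∑' n, δ n := by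
          refine le_trans (measure_mono hsub) (le_trans (measure_iUnion_le _) ?_)
          exact ENNReal.tsum_le_tsum fun n => diff_le_of_IA μ (hFsub n) (hFm n) (hFle n)
        calc μ ((⋃ n, f n)ᶜ) ≤ μ (⋂ n, F n) + μ ((⋃ n, f n)ᶜ \ ⋂ n, F n) := by
              refine le_trans (measure_mono fun z hz => ?_) (measure_union_le _ _)
              by_cases hzF : z ∈ ⋂ n, F n
              · exact Or.inl hzF
              · exact Or.inr ⟨hz, hzF⟩
          _ ≤ μ (⋂ n, F n) + ε := add_le_add_right (h1.trans hδsum.le) _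
  exact (key A (by rw [generateFrom_cylK_univ]; exact hA)).1

lemma exists_compact_subset [IsProbabilityMeasure μ] {A : Set (I → Bool)}
    (hA : NullMeasurableSet A μ) {ε : ENNReal} (hε : ε ≠ 0) :
    ∃ F, IsCompact F ∧ F ⊆ A ∧ μ A ≤ μ F + ε := by
  obtain ⟨T, hTsub, hTm, hTae⟩ := hA.exists_measurable_subset_ae_eq
  obtain ⟨F, hFc, -, hFsub, hFle⟩ := IA_of_measurable μ hTm ε hε
  refine ⟨F, hFc.isCompact, hFsub.trans hTsub, ?_⟩
  rw [← measure_congr hTae]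
  exact hFle

include hcyl in
lemma map_flipAt [IsProbabilityMeasure μ] (i : I) : Measure.map (flipAt i) μ = μ := by
  haveI : IsProbabilityMeasure (Measure.map (flipAt i) μ) :=
    Measure.isProbabilityMeasure_map (measurable_flipAt i).aemeasurable
  apply ext_of_cylSet
  intro s y
  rw [Measure.map_apply (measurable_flipAt i) (measurableSet_cylSet s y),
    flipAt_preimage_cylSet]
  rw [show μ (cylSet s (Function.update y i (!y i))) = _ from hcyl s _,
    show μ (cylSet s y) = _ from hcyl s y]

include hcyl in
lemma nullMeasurable_preimage_borel [IsProbabilityMeasure μ]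
    (h : (I → Bool) → WeakDual ℝ C(I → Bool, ℝ)) (hcont : Continuous h)
    {B : Set (WeakDual ℝ C(I → Bool, ℝ))}
    (hB : MeasurableSet[borel (WeakDual ℝ C(I → Bool, ℝ))] B) :
    NullMeasurableSet (h ⁻¹' B) μ := by
  refine MeasurableSpace.generateFrom_induction
    (p := fun S _ => NullMeasurableSet (h ⁻¹' S) μ)
    ({s : Set (WeakDual ℝ C(I → Bool, ℝ)) | IsOpen s}) ?_ ?_ ?_ ?_ B hB
  · intro t ht _
    exact nullMeasurableSet_of_isOpen μ hcyl (hcont.isOpen_preimage t ht)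
  · simp
  · intro t _ ih
    rw [preimage_compl]
    exact ih.compl
  · intro f _ ih
    rw [preimage_iUnion]
    exact NullMeasurableSet.iUnion ih

include hcyl in
/-- the common computation and inner regularity for maps of the completed diagonal measure -/
lemma innerRegular_map_aux [IsProbabilityMeasure μ]
    (h : (I → Bool) → WeakDual ℝ C(I → Bool, ℝ)) (hcont : Continuous h)
    (π : (NullMeasurableSpace (I → Bool) μ × NullMeasurableSpace (I → Bool) μ) →
      NullMeasurableSpace (I → Bool) μ)
    (hπ : Measurable π)
    (hπβ : ∀ S : Set (I → Bool),
      (fun x : NullMeasurableSpace (I → Bool) μ => (x, x)) ⁻¹' (π ⁻¹' S) = S)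
    (F : NullMeasurableSpace
      (NullMeasurableSpace (I → Bool) μ × NullMeasurableSpace (I → Bool) μ) (nuMeas μ) →
      WeakDual ℝ C(I → Bool, ℝ))
    (hFeq : ∀ B : Set (WeakDual ℝ C(I → Bool, ℝ)),
      F ⁻¹' B = π ⁻¹' (h ⁻¹' B)) :
    (∀ B : Set (WeakDual ℝ C(I → Bool, ℝ)),
      MeasurableSet[borel (WeakDual ℝ C(I → Bool, ℝ))] B → MeasurableSet (F ⁻¹' B)) ∧
    (@Measure.InnerRegular _ (borel (WeakDual ℝ C(I → Bool, ℝ))) _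
      (@Measure.map _ _ _ (borel (WeakDual ℝ C(I → Bool, ℝ))) F (nuMeas μ).completion)) := by
  have hmeasB : ∀ B : Set (WeakDual ℝ C(I → Bool, ℝ)),
      MeasurableSet[borel (WeakDual ℝ C(I → Bool, ℝ))] B → MeasurableSet (F ⁻¹' B) := by
    intro B hB
    rw [hFeq]
    have h1 : NullMeasurableSet (h ⁻¹' B) μ := nullMeasurable_preimage_borel μ hcyl h hcont hB
    exact (hπ h1).nullMeasurableSet
  refine ⟨hmeasB, ?_⟩
  have hFmeas : @Measurable _ _ _ (borel (WeakDual ℝ C(I → Bool, ℝ))) F := fun B hB => hmeasB B hB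
  -- value of the mapped measure
  have hval : ∀ B : Set (WeakDual ℝ C(I → Bool, ℝ)),
      MeasurableSet[borel (WeakDual ℝ C(I → Bool, ℝ))] B →
      (@Measure.map _ _ _ (borel (WeakDual ℝ C(I → Bool, ℝ))) F (nuMeas μ).completion) B
        = μ (h ⁻¹' B) := by
    intro B hB
    rw [Measure.map_apply hFmeas hB]
    have h1 : NullMeasurableSet (h ⁻¹' B) μ := nullMeasurable_preimage_borel μ hcyl h hcont hB
    have h2 : (nuMeas μ).completion (F ⁻¹' B) = (nuMeas μ) (π ⁻¹' (h ⁻¹' B)) := by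
      rw [hFeq]; rfl
    rw [h2, nuMeas]
    exact (Measure.map_apply (measurable_beta μ) (hπ h1)).trans
      (congrArg μ.completion (hπβ (h ⁻¹' B)))
  refine @Measure.InnerRegular.mk _ (borel (WeakDual ℝ C(I → Bool, ℝ))) _ _ ?_
  intro U hU r hr
  rw [hval U hU] at hr
  have hA : NullMeasurableSet (h ⁻¹' U) μ := nullMeasurable_preimage_borel μ hcyl h hcont hU
  have hfin : μ (h ⁻¹' U) ≠ ⊤ := measure_ne_top μ _
  set ε := (μ (h ⁻¹' U) - r) / 2 with hε
  have hεne : ε ≠ 0 := (ENNReal.half_pos (tsub_pos_of_lt hr).ne').ne'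
  obtain ⟨Fc, hFc, hFsub, hFle⟩ := exists_compact_subset μ hA hεne
  have hrF : r < μ Fc := by
    by_contra hle
    push_neg at hle
    have h3 : μ (h ⁻¹' U) ≤ r + ε := le_trans hFle (add_le_add_left hle _)
    have h4 : r + ε < μ (h ⁻¹' U) := by
      calc r + ε < r + (μ (h ⁻¹' U) - r) := by
            refine ENNReal.add_lt_add_left ?_ ?_
            · exact ne_top_of_lt (lt_of_lt_of_le hr le_top)
            · exact ENNReal.half_lt_self (tsub_pos_of_lt hr).ne'
                (by simp [ENNReal.sub_ne_top hfin])
        _ = μ (h ⁻¹' U) := add_tsub_cancel_of_le hr.le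
    exact absurd h3 h4.not_ge
  refine ⟨h '' Fc, ?_, hFc.image hcont, ?_⟩
  · rintro z ⟨x, hx, rfl⟩
    exact hFsub hx
  · have hKm : MeasurableSet[borel (WeakDual ℝ C(I → Bool, ℝ))] (h '' Fc) := by
      have hcl : IsClosed (h '' Fc) := (hFc.image hcont).isClosed
      have := MeasurableSpace.measurableSet_generateFrom
        (show (h '' Fc)ᶜ ∈ {s : Set (WeakDual ℝ C(I → Bool, ℝ)) | IsOpen s} from
          hcl.isOpen_compl)
      simpa using this.compl
    rw [hval _ hKm]
    refine lt_of_lt_of_le hrF (measure_mono ?_)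
    exact subset_preimage_image h Fc

include hcyl in
lemma diag_not_measurable [IsProbabilityMeasure μ] (hI : Cardinal.mk I = Cardinal.continuum) :
    ¬ @MeasurableSet
        (NullMeasurableSpace
          (NullMeasurableSpace (I → Bool) μ × NullMeasurableSpace (I → Bool) μ) (nuMeas μ)) _
        {ω : NullMeasurableSpace
            (NullMeasurableSpace (I → Bool) μ × NullMeasurableSpace (I → Bool) μ) (nuMeas μ) |
          (ω : NullMeasurableSpace (I → Bool) μ × NullMeasurableSpace (I → Bool) μ).1 =
          (ω : NullMeasurableSpace (I → Bool) μ × NullMeasurableSpace (I → Bool) μ).2} := by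
  intro hmeas
  set β : NullMeasurableSpace (I → Bool) μ →
      NullMeasurableSpace (I → Bool) μ × NullMeasurableSpace (I → Bool) μ :=
    fun x => (x, x) with hβdef
  set D : Set (NullMeasurableSpace (I → Bool) μ × NullMeasurableSpace (I → Bool) μ) :=
    {p | p.1 = p.2} with hD
  have hDnm : NullMeasurableSet D (nuMeas μ) := hmeas
  obtain ⟨W, hWsub, hWm, hWae⟩ := hDnm.exists_measurable_subset_ae_eq
  -- the complementary null part
  have hνDW : nuMeas μ (D \ W) = 0 := (ae_eq_set.1 hWae).2
  set N := toMeasurable (nuMeas μ) (D \ W) with hN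
  have hNnull : nuMeas μ N = 0 := by
    rw [hN, measure_toMeasurable]; exact hνDW
  -- β-preimages
  haveI : IsProbabilityMeasure μ.completion :=
    ⟨(Measure.completion_apply μ _).trans measure_univ⟩
  have hβW : NullMeasurableSet (β ⁻¹' W : Set (I → Bool)) μ := measurable_beta μ hWm
  have hβN0 : μ.completion (β ⁻¹' N) = 0 := by
    rw [← Measure.map_apply (measurable_beta μ) (measurableSet_toMeasurable _ _)]
    exact hNnull
  have hβW1 : μ.completion (β ⁻¹' W) = 1 := by
    apply le_antisymm
    · exact le_trans (measure_mono (subset_univ _)) (le_of_eq measure_univ)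
    · have hcov : (univ : Set (NullMeasurableSpace (I → Bool) μ)) ⊆ β ⁻¹' W ∪ β ⁻¹' N := by
        intro x _
        by_cases hx : β x ∈ W
        · exact Or.inl hx
        · refine Or.inr (subset_toMeasurable _ _ ⟨?_, hx⟩)
          show (β x).1 = (β x).2
          rfl
      calc (1 : ENNReal) = μ.completion univ := measure_univ.symm
        _ ≤ μ.completion (β ⁻¹' W ∪ β ⁻¹' N) := measure_mono hcov
        _ ≤ μ.completion (β ⁻¹' W) + μ.completion (β ⁻¹' N) := measure_union_le _ _
        _ = μ.completion (β ⁻¹' W) := by rw [hβN0, add_zero]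
  -- a genuinely measurable full-measure subset
  obtain ⟨S₀, hS₀sub, hS₀m, hS₀ae⟩ := hβW.exists_measurable_subset_ae_eq
  have hS₀1 : μ S₀ = 1 := by
    have h3 : μ S₀ = μ (β ⁻¹' W) := measure_congr hS₀ae
    rw [h3]
    exact hβW1
  -- countable rectangles generating W
  obtain ⟨R, hRgen, hWgen⟩ := exists_countable_rectangles hWm
  have hchoice : ∀ n, ∃ (C : Set (I → Bool)) (side : Bool),
      NullMeasurableSet C μ ∧
      R n = (fun p : NullMeasurableSpace (I → Bool) μ × NullMeasurableSpace (I → Bool) μ =>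
        if side then p.1 else p.2) ⁻¹' C := by
    intro n
    rcases hRgen n with ⟨A, hA, hR⟩ | ⟨B, hB, hR⟩
    · exact ⟨A, true, hA, by simpa using hR⟩
    · exact ⟨B, false, hB, by simpa using hR⟩
  choose C side hCm hReq using hchoice
  have hEex : ∀ n, ∃ E, MeasurableSet E ∧ C n =ᵐ[μ] E := fun n => hCm n
  choose E hEm hEae using hEex
  set M : ℕ → Set (I → Bool) := fun n =>
    toMeasurable μ (C n \ E n) ∪ toMeasurable μ (E n \ C n) with hM
  have hMnull : ∀ n, μ (M n) = 0 := by
    intro n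
    apply measure_union_null <;> rw [measure_toMeasurable]
    · exact (ae_eq_set.1 (hEae n)).1
    · exact (ae_eq_set.1 (hEae n)).2
  have hMm : ∀ n, MeasurableSet (M n) := fun n =>
    (measurableSet_toMeasurable _ _).union (measurableSet_toMeasurable _ _)
  choose J hJc hJdep using fun n => exists_countable_coords (hEm n)
  set JJ := ⋃ n, J n with hJJ
  have hJJc : JJ.Countable := countable_iUnion hJc
  -- pick a coordinate outside JJ
  have hIbig : ¬ Countable I := by
    intro hcount
    have h1 : Cardinal.mk I ≤ Cardinal.aleph0 := Cardinal.mk_le_aleph0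
    rw [hI] at h1
    exact absurd h1 (not_le.2 Cardinal.aleph0_lt_continuum)
  obtain ⟨i, hi⟩ : ∃ i, i ∉ JJ := by
    by_contra h
    push_neg at h
    have : JJ = univ := eq_univ_of_forall h
    rw [this] at hJJc
    exact hIbig (countable_univ_iff.1 hJJc)
  set MM := ⋃ n, M n with hMM
  have hMM0 : μ MM = 0 := measure_iUnion_null hMnull
  have hMMm : MeasurableSet MM := MeasurableSet.iUnion hMm
  set S' := S₀ \ MM with hS'
  have hS'm : MeasurableSet S' := hS₀m.diff hMMm
  have hS'1 : μ S' = 1 := by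
    rw [hS', measure_diff_null hMM0]
    exact hS₀1
  -- flip and find a point
  set T := flipAt i with hT
  have hTS'm : MeasurableSet (T ⁻¹' S') := measurable_flipAt i hS'm
  have hTS'1 : μ (T ⁻¹' S') = 1 := by
    rw [← Measure.map_apply (measurable_flipAt i) hS'm, map_flipAt μ hcyl i]
    exact hS'1
  have hpos : μ (S' ∩ T ⁻¹' S') ≠ 0 := by
    intro h0
    have hcov : (univ : Set (I → Bool)) ⊆ (S' ∩ T ⁻¹' S') ∪ (S'ᶜ ∪ (T ⁻¹' S')ᶜ) := by
      intro z _
      by_cases h1 : z ∈ S'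
      · by_cases h2 : z ∈ T ⁻¹' S'
        · exact Or.inl ⟨h1, h2⟩
        · exact Or.inr (Or.inr h2)
      · exact Or.inr (Or.inl h1)
    have hc1 : μ S'ᶜ = 0 := by
      rw [measure_compl hS'm (measure_ne_top μ _), hS'1, measure_univ, tsub_self]
    have hc2 : μ (T ⁻¹' S')ᶜ = 0 := by
      rw [measure_compl hTS'm (measure_ne_top μ _), hTS'1, measure_univ, tsub_self]
    have : (1 : ENNReal) ≤ 0 := by
      calc (1 : ENNReal) = μ univ := measure_univ.symm
        _ ≤ μ ((S' ∩ T ⁻¹' S') ∪ (S'ᶜ ∪ (T ⁻¹' S')ᶜ)) := measure_mono hcov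
        _ ≤ μ (S' ∩ T ⁻¹' S') + (μ S'ᶜ + μ (T ⁻¹' S')ᶜ) :=
            le_trans (measure_union_le _ _) (add_le_add_right (measure_union_le _ _) _)
        _ = 0 := by rw [h0, hc1, hc2, add_zero, add_zero]
    simp at this
  obtain ⟨x, hx1, hx2⟩ := nonempty_of_measure_ne_zero hpos
  set x' := T x with hx'
  have hxx' : ∀ j, j ≠ i → x j = x' j := by
    intro j hj
    rw [hx', hT]
    exact (Function.update_of_ne hj _ _).symm
  have hne : x ≠ x' := by
    intro h
    have h2 : x' i = !(x i) := by
      rw [hx', hT]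
      exact Function.update_self i (!x i) x
    rw [← h] at h2
    exact Bool.not_ne_self (x i) h2.symm
  -- membership of the two points
  have hxS : x ∈ S' := hx1
  have hx'S : x' ∈ S' := hx2
  have hxW : (x, x) ∈ W := hS₀sub hxS.1
  have hxMM : x ∉ MM := hxS.2
  have hx'MM : x' ∉ MM := hx'S.2
  have hkey : ∀ n, ((x, x) ∈ R n ↔ (x, x') ∈ R n) := by
    intro n
    rw [hReq n]
    have hCiff : ∀ z : I → Bool, z ∉ MM → (z ∈ C n ↔ z ∈ E n) := by
      intro z hz
      have hz1 : z ∉ M n := fun h => hz (mem_iUnion.2 ⟨n, h⟩)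
      constructor
      · intro h
        by_contra h2
        exact hz1 (Or.inl (subset_toMeasurable _ _ ⟨h, h2⟩))
      · intro h
        by_contra h2
        exact hz1 (Or.inr (subset_toMeasurable _ _ ⟨h, h2⟩))
    have hEiff : x ∈ E n ↔ x' ∈ E n := by
      refine hJdep n x x' fun j hj => ?_
      refine hxx' j fun hji => ?_
      rw [hji] at hj
      exact hi (mem_iUnion.2 ⟨n, hj⟩)
    cases hside : side n
    · -- snd side
      simp only [hside, mem_preimage, Bool.false_eq_true, if_false]
      exact (hCiff x hxMM).trans (hEiff.trans (hCiff x' hx'MM).symm)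
    · -- fst side
      simp [hside]
      exact Iff.rfl
  have hWiff : (x, x) ∈ W ↔ (x, x') ∈ W := by
    refine MeasurableSpace.generateFrom_induction
      (p := fun S _ => ((x, x) ∈ S ↔ (x, x') ∈ S)) (Set.range R) ?_ ?_ ?_ ?_ W hWgen
    · rintro t ⟨n, rfl⟩ _
      exact hkey n
    · exact Iff.rfl
    · exact fun t _ ih => not_congr ih
    · intro f _ ih
      exact ⟨fun hz => let ⟨n, hn⟩ := Set.mem_iUnion.1 hz; Set.mem_iUnion.2 ⟨n, (ih n).1 hn⟩,
        fun hz => let ⟨n, hn⟩ := Set.mem_iUnion.1 hz; Set.mem_iUnion.2 ⟨n, (ih n).2 hn⟩⟩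
  have : x = x' := hWsub (hWiff.1 hxW)
  exact hne this

end Stmt10


/-- Let `I` have cardinality `2^ℵ₀`, let `X = {0,1}^I` (a compact
Hausdorff space), and let `μ` be the product of fair Bernoulli measures on `X`
(characterized by its values on cylinder sets); the σ-algebra `𝒜` of
`μ`-measurable sets is the measurable-space structure of
`NullMeasurableSpace X μ`.  Let `E` be the dual of the Banach space `C(X, ℝ)`
with the weak* topology, `e : X → E` the canonical evaluation embedding,
`(Ω, Σ, P)` the completion of `(X × X, 𝒜 ⊗ 𝒜, ν)` where `ν = β[μ]` is the
pushforward of `μ` under the diagonal map, and set `f = e ∘ π₁`,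
`g = -(e ∘ π₂)`.  Then (a) `f⁻¹(B), g⁻¹(B) ∈ Σ` for every Borel `B ⊆ E`;
(b) the image measures `f[P]` and `g[P]` are Radon, i.e. inner regular with
respect to compact sets on measurable sets; and (c) `h = f + g` satisfies
`h⁻¹({0}) = D` (the diagonal) and `h⁻¹({0}) ∉ Σ`. -/
theorem stmt10 (I : Type) (hI : Cardinal.mk I = Cardinal.continuum)
    (μ : Measure (I → Bool)) (hprob : IsProbabilityMeasure μ)
    (hcyl : ∀ (s : Finset I) (y : I → Bool),
      μ {x : I → Bool | ∀ i ∈ s, x i = y i} = (1 / 2 : ENNReal) ^ s.card) :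
    (∀ B : Set (WeakDual ℝ C(I → Bool, ℝ)),
      MeasurableSet[borel (WeakDual ℝ C(I → Bool, ℝ))] B →
        MeasurableSet (fFun μ ⁻¹' B)) ∧
    (∀ B : Set (WeakDual ℝ C(I → Bool, ℝ)),
      MeasurableSet[borel (WeakDual ℝ C(I → Bool, ℝ))] B →
        MeasurableSet (gFun μ ⁻¹' B)) ∧
    (@Measure.InnerRegular _ (borel (WeakDual ℝ C(I → Bool, ℝ))) _
      (@Measure.map _ _ _ (borel (WeakDual ℝ C(I → Bool, ℝ))) (fFun μ)
        (nuMeas μ).completion)) ∧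
    (@Measure.InnerRegular _ (borel (WeakDual ℝ C(I → Bool, ℝ))) _
      (@Measure.map _ _ _ (borel (WeakDual ℝ C(I → Bool, ℝ))) (gFun μ)
        (nuMeas μ).completion)) ∧
    (fun ω => fFun μ ω + gFun μ ω) ⁻¹' {0} =
      {ω : NullMeasurableSpace
          (NullMeasurableSpace (I → Bool) μ × NullMeasurableSpace (I → Bool) μ)
          (nuMeas μ) |
        (ω : NullMeasurableSpace (I → Bool) μ × NullMeasurableSpace (I → Bool) μ).1 =
        (ω : NullMeasurableSpace (I → Bool) μ × NullMeasurableSpace (I → Bool) μ).2} ∧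
    ¬ MeasurableSet ((fun ω => fFun μ ω + gFun μ ω) ⁻¹' {0}) := by
  haveI := hprob
  obtain ⟨ha_f, hb_f⟩ := Stmt10.innerRegular_map_aux μ hcyl (diracEmb I)
    Stmt10.continuous_diracEmb Prod.fst measurable_fst (fun S => rfl) (fFun μ) (fun B => rfl)
  obtain ⟨ha_g, hb_g⟩ := Stmt10.innerRegular_map_aux μ hcyl (fun x => - diracEmb I x)
    (continuous_neg.comp Stmt10.continuous_diracEmb) Prod.snd measurable_snd (fun S => rfl)
    (gFun μ) (fun B => rfl)
  have hset : (fun ω => fFun μ ω + gFun μ ω) ⁻¹' {0} =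
      {ω : NullMeasurableSpace
          (NullMeasurableSpace (I → Bool) μ × NullMeasurableSpace (I → Bool) μ)
          (nuMeas μ) |
        (ω : NullMeasurableSpace (I → Bool) μ × NullMeasurableSpace (I → Bool) μ).1 =
        (ω : NullMeasurableSpace (I → Bool) μ × NullMeasurableSpace (I → Bool) μ).2} := by
    ext ω
    simp only [Set.mem_preimage, Set.mem_singleton_iff, Set.mem_setOf_eq]
    have h1 : fFun μ ω + gFun μ ω =
        diracEmb I (ω : NullMeasurableSpace (I → Bool) μ ×
          NullMeasurableSpace (I → Bool) μ).1 +
        -diracEmb I (ω : NullMeasurableSpace (I → Bool) μ ×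
          NullMeasurableSpace (I → Bool) μ).2 := rfl
    rw [h1, add_neg_eq_zero]
    exact Stmt10.injective_diracEmb.eq_iff
  refine ⟨ha_f, ha_g, hb_f, hb_g, hset, ?_⟩
  rw [hset]
  exact Stmt10.diag_not_measurable μ hcyl hI
end

section
/- There exist a complete probability space (Ω, Σ, P), a real locally convex Hausdorff topological vector space E, and functions f, g : Ω → E such that: (a) f⁻¹(B) ∈ Σ and g⁻¹(B) ∈ Σ for every Borel set B ⊆ E; (b) the image measures f[P] and g[P] are Radon probability measures on E; and (c) the sum h = f + g satisfies h⁻¹({0}) ∉ Σ. Consequently, the class L⁰(Ω, Σ, P, E) of Borel-measurable functions Ω → E whose image measure is Radon is not closed under addition. -/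
open MeasureTheory

/-- The property that `(Ω, Σ, P)` is a complete probability space, `E` is a
real locally convex Hausdorff topological vector space (carrying its Borel
σ-algebra), `f, g : Ω → E` are Borel measurable, their image measures `f[P]`
and `g[P]` are Radon probability measures on `E` (Radon meaning inner regular
with respect to compact sets on measurable sets), and yet the sum `h = f + g`
satisfies `h⁻¹({0}) ∉ Σ` (so `h` is not even Borel measurable, and the class
`L⁰(Ω, Σ, P, E)` of Borel-measurable functions with Radon image measure is not
closed under addition). -/
def AdditionCounterexample (Ω : Type) [MeasurableSpace Ω] (P : Measure Ω)
    (E : Type) [AddCommGroup E] [Module ℝ E] [TopologicalSpace E]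
    [MeasurableSpace E] [BorelSpace E] (f g : Ω → E) : Prop :=
  P.IsComplete ∧ IsProbabilityMeasure P ∧
  IsTopologicalAddGroup E ∧ ContinuousSMul ℝ E ∧ LocallyConvexSpace ℝ E ∧
  T2Space E ∧
  (∀ B : Set E, MeasurableSet B → MeasurableSet (f ⁻¹' B)) ∧
  (∀ B : Set E, MeasurableSet B → MeasurableSet (g ⁻¹' B)) ∧
  IsProbabilityMeasure (P.map f) ∧ IsProbabilityMeasure (P.map g) ∧
  (P.map f).InnerRegular ∧ (P.map g).InnerRegular ∧
  ¬ MeasurableSet ((fun ω => f ω + g ω) ⁻¹' {0})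

open Set Filter Topology
open scoped ENNReal symmDiff
noncomputable section



/-- Countability of "right endpoints": if every `t ∈ T` is outside `W` but has a left
punctured neighborhood inside `W`, then `T` is countable. -/
lemma countable_of_left_nbhd {T W : Set ℝ}
    (h : ∀ t ∈ T, t ∉ W ∧ ∃ δ > 0, Set.Ioo (t - δ) t ⊆ W) : T.Countable := by
  have : ∀ t : T, ∃ q : ℚ, (t : ℝ) - (h t.1 t.2).2.choose < q ∧ (q : ℝ) < t := by
    intro t
    exact exists_rat_btwn (by linarith [(h t.1 t.2).2.choose_spec.1])
  choose q hq1 hq2 using this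
  have hinj : Function.Injective q := by
    intro a b hab
    by_contra hne
    have hne' : (a : ℝ) ≠ b := fun h' => hne (Subtype.ext h')
    rcases hne'.lt_or_gt with hlt | hlt
    · -- a < b, q a = q b; then a ∈ Ioo (b - δ_b) b ⊆ W, contradiction with a ∉ W
      have h1 : (b : ℝ) - (h b.1 b.2).2.choose < a := by
        have := hq1 b; rw [← hab] at this; linarith [hq2 a]
      exact (h a.1 a.2).1 ((h b.1 b.2).2.choose_spec.2 ⟨h1, hlt⟩)
    · have h1 : (a : ℝ) - (h a.1 a.2).2.choose < b := by
        have := hq1 a; rw [hab] at this; linarith [hq2 b]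
      exact (h b.1 b.2).1 ((h a.1 a.2).2.choose_spec.2 ⟨h1, hlt⟩)
  have : Countable T := Function.Injective.countable (f := q) hinj
  exact Set.countable_coe_iff.mp this

lemma countable_of_right_nbhd {T W : Set ℝ}
    (h : ∀ t ∈ T, t ∉ W ∧ ∃ δ > 0, Set.Ioo t (t + δ) ⊆ W) : T.Countable := by
  have hneg : ((fun x : ℝ => -x) '' T).Countable := by
    apply countable_of_left_nbhd (W := (fun x : ℝ => -x) '' W)
    rintro t ⟨t₀, ht₀, rfl⟩
    obtain ⟨hnW, δ, hδ, hsub⟩ := h t₀ ht₀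
    refine ⟨fun ⟨w, hw, hww⟩ => hnW (by simpa [neg_eq_iff_eq_neg.mp hww.symm] using hw ; ), δ, hδ, ?_⟩
    · rintro x ⟨hx1, hx2⟩
      refine ⟨-x, hsub ⟨by simp only [] at hx1 hx2 ⊢; linarith, by simp only [] at hx1 hx2 ⊢; linarith⟩, by ring⟩
  have : T = (fun x : ℝ => -x) '' ((fun x : ℝ => -x) '' T) := by
    ext x; simp
  rw [this]; exact hneg.image _

/-- A set of reals which contains a left interval `Ioc (t-δ) t` around each of its points
is measurable. -/
lemma measurableSet_of_left_nbhd {S : Set ℝ}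
    (h : ∀ t ∈ S, ∃ δ > 0, Set.Ioc (t - δ) t ⊆ S) : MeasurableSet S := by
  have hcnt : (S \ interior S).Countable := by
    apply countable_of_left_nbhd (W := interior S)
    rintro t ⟨htS, htI⟩
    obtain ⟨δ, hδ, hsub⟩ := h t htS
    exact ⟨htI, δ, hδ, interior_maximal (fun x hx => hsub ⟨hx.1, le_of_lt hx.2⟩) isOpen_Ioo⟩
  have hS : S = interior S ∪ (S \ interior S) :=
    (Set.union_diff_cancel' (le_refl _) interior_subset).symm
  rw [hS]
  exact (isOpen_interior.measurableSet).union hcnt.measurableSet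

lemma measurableSet_of_right_nbhd {S : Set ℝ}
    (h : ∀ t ∈ S, ∃ δ > 0, Set.Ico t (t + δ) ⊆ S) : MeasurableSet S := by
  have hcnt : (S \ interior S).Countable := by
    apply countable_of_right_nbhd (W := interior S)
    rintro t ⟨htS, htI⟩
    obtain ⟨δ, hδ, hsub⟩ := h t htS
    exact ⟨htI, δ, hδ, interior_maximal (fun x hx => hsub ⟨le_of_lt hx.1, hx.2⟩) isOpen_Ioo⟩
  have hS : S = interior S ∪ (S \ interior S) :=
    (Set.union_diff_cancel' (le_refl _) interior_subset).symm
  rw [hS]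
  exact (isOpen_interior.measurableSet).union hcnt.measurableSet



/-- indicator of `(-∞, t)` -/
def lf (t : ℝ) : ℝ → ℝ := fun s => if s < t then 1 else 0
/-- indicator of `(-∞, t]` -/
def rf (t : ℝ) : ℝ → ℝ := fun s => if s ≤ t then 1 else 0

lemma lf_val01 (t s : ℝ) : lf t s = 0 ∨ lf t s = 1 := by
  unfold lf; split <;> simp
lemma rf_val01 (t s : ℝ) : rf t s = 0 ∨ rf t s = 1 := by
  unfold rf; split <;> simp

/-- Open sets in the product topology contain finite cylinders. -/
lemma cyl {U : Set (ℝ → ℝ)} (hU : IsOpen U) {x : ℝ → ℝ} (hx : x ∈ U) :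
    ∃ I : Set ℝ, I.Finite ∧ ∀ y : ℝ → ℝ, (∀ s ∈ I, y s = x s) → y ∈ U := by
  have hnh : U ∈ nhds x := hU.mem_nhds hx
  rw [nhds_pi] at hnh
  obtain ⟨I, hIfin, t, ht, hsub⟩ := Filter.mem_pi.mp hnh
  refine ⟨I, hIfin, fun y hy => hsub fun s hs => ?_⟩
  rw [hy s hs]; exact mem_of_mem_nhds (ht s)

lemma avoid {I : Set ℝ} (hI : I.Finite) (t : ℝ) :
    ∃ δ > 0, ∀ s ∈ I, |s - t| < δ → s = t := by
  have hcl : IsClosed (I \ {t}) := (show (I \ {t}).Finite from hI.diff).isClosed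
  have htn : t ∈ (I \ {t})ᶜ := fun h => h.2 rfl
  obtain ⟨δ, hδ, hball⟩ := Metric.isOpen_iff.mp hcl.isOpen_compl t htn
  refine ⟨δ, hδ, fun s hs habs => ?_⟩
  by_contra hne
  exact (hball (show dist s t < δ by rwa [Real.dist_eq]) : s ∉ I \ {t}) ⟨hs, hne⟩

/-- (a1): the preimage of an open set under `lf` contains left intervals. -/
lemma lf_left {U : Set (ℝ → ℝ)} (hU : IsOpen U) {t : ℝ} (ht : lf t ∈ U) :
    ∃ δ > 0, ∀ t' ∈ Set.Ioc (t - δ) t, lf t' ∈ U := by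
  obtain ⟨I, hIfin, hcyl⟩ := cyl hU ht
  obtain ⟨δ, hδ, havoid⟩ := avoid hIfin t
  refine ⟨δ, hδ, fun t' ht' => hcyl _ fun s hs => ?_⟩
  rcases lt_or_ge (|s - t|) δ with hlt | hge
  · have : s = t := havoid s hs hlt
    subst this
    have h1 : ¬ (s < t') := not_lt.mpr ht'.2
    simp [lf, h1]
  · rcases abs_sub_lt_iff.not.mp (not_lt.mpr hge) with h
    push_neg at h
    rcases le_or_gt s (t - δ) with hle | hgt
    · have h1 : s < t' := by linarith [ht'.1]
      have h2 : s < t := by linarith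
      simp [lf, h1, h2]
    · have hge' : s ≥ t + δ := by
        by_contra hc
        push_neg at hc
        have h1 : s - t < δ := by linarith
        have h2 : t - s < δ := by linarith
        exact absurd (abs_sub_lt_iff.mpr ⟨h1, h2⟩) (not_lt.mpr hge)
      have h1 : ¬ (s < t') := by push_neg; linarith [ht'.2]
      have h2 : ¬ (s < t) := by push_neg; linarith
      simp [lf, h1, h2]

/-- (a2): near `lf t ∈ U`, also `rf t' ∈ U` for `t'` slightly left of `t`. -/
lemma lf_left_rf {U : Set (ℝ → ℝ)} (hU : IsOpen U) {t : ℝ} (ht : lf t ∈ U) :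
    ∃ δ > 0, ∀ t' ∈ Set.Ioo (t - δ) t, rf t' ∈ U := by
  obtain ⟨I, hIfin, hcyl⟩ := cyl hU ht
  obtain ⟨δ, hδ, havoid⟩ := avoid hIfin t
  refine ⟨δ, hδ, fun t' ht' => hcyl _ fun s hs => ?_⟩
  rcases lt_or_ge (|s - t|) δ with hlt | hge
  · have : s = t := havoid s hs hlt
    subst this
    have h1 : ¬ (s ≤ t') := not_le.mpr ht'.2
    simp [lf, rf, h1]
  · rcases le_or_gt s (t - δ) with hle | hgt
    · have h1 : s ≤ t' := by linarith [ht'.1]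
      have h2 : s < t := by linarith
      simp [lf, rf, h1, h2]
    · have hge' : s ≥ t + δ := by
        by_contra hc
        push_neg at hc
        have h1 : s - t < δ := by linarith
        have h2 : t - s < δ := by linarith
        exact absurd (abs_sub_lt_iff.mpr ⟨h1, h2⟩) (not_lt.mpr hge)
      have h1 : ¬ (s ≤ t') := by push_neg; linarith [ht'.2]
      have h2 : ¬ (s < t) := by push_neg; linarith
      simp [lf, rf, h1, h2]

/-- (b1) -/
lemma rf_right {U : Set (ℝ → ℝ)} (hU : IsOpen U) {t : ℝ} (ht : rf t ∈ U) :
    ∃ δ > 0, ∀ t' ∈ Set.Ico t (t + δ), rf t' ∈ U := by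
  obtain ⟨I, hIfin, hcyl⟩ := cyl hU ht
  obtain ⟨δ, hδ, havoid⟩ := avoid hIfin t
  refine ⟨δ, hδ, fun t' ht' => hcyl _ fun s hs => ?_⟩
  rcases lt_or_ge (|s - t|) δ with hlt | hge
  · have : s = t := havoid s hs hlt
    subst this
    have h1 : s ≤ t' := ht'.1
    simp [rf, h1]
  · rcases le_or_gt s (t - δ) with hle | hgt
    · have h1 : s ≤ t' := by linarith [ht'.1]
      have h2 : s ≤ t := by linarith
      simp [rf, h1, h2]
    · have hge' : s ≥ t + δ := by
        by_contra hc
        push_neg at hc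
        have h1 : s - t < δ := by linarith
        have h2 : t - s < δ := by linarith
        exact absurd (abs_sub_lt_iff.mpr ⟨h1, h2⟩) (not_lt.mpr hge)
      have h1 : ¬ (s ≤ t') := by push_neg; linarith [ht'.2]
      have h2 : ¬ (s ≤ t) := by push_neg; linarith
      simp [rf, h1, h2]

/-- (b2) -/
lemma rf_right_lf {U : Set (ℝ → ℝ)} (hU : IsOpen U) {t : ℝ} (ht : rf t ∈ U) :
    ∃ δ > 0, ∀ t' ∈ Set.Ioo t (t + δ), lf t' ∈ U := by
  obtain ⟨I, hIfin, hcyl⟩ := cyl hU ht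
  obtain ⟨δ, hδ, havoid⟩ := avoid hIfin t
  refine ⟨δ, hδ, fun t' ht' => hcyl _ fun s hs => ?_⟩
  rcases lt_or_ge (|s - t|) δ with hlt | hge
  · have : s = t := havoid s hs hlt
    subst this
    have h1 : s < t' := ht'.1
    simp [rf, lf, h1]
  · rcases le_or_gt s (t - δ) with hle | hgt
    · have h1 : s < t' := by linarith [ht'.1]
      have h2 : s ≤ t := by linarith
      simp [rf, lf, h1, h2]
    · have hge' : s ≥ t + δ := by
        by_contra hc
        push_neg at hc
        have h1 : s - t < δ := by linarith
        have h2 : t - s < δ := by linarith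
        exact absurd (abs_sub_lt_iff.mpr ⟨h1, h2⟩) (not_lt.mpr hge)
      have h1 : ¬ (s < t') := by push_neg; linarith [ht'.2]
      have h2 : ¬ (s ≤ t) := by push_neg; linarith
      simp [rf, lf, h1, h2]


/-- The key structural predicate on Borel subsets of `ℝ → ℝ`. -/
def GoodSet (B : Set (ℝ → ℝ)) : Prop :=
  MeasurableSet {t : ℝ | lf t ∈ B} ∧ MeasurableSet {t : ℝ | rf t ∈ B} ∧
    (symmDiff {t : ℝ | lf t ∈ B} {t : ℝ | rf t ∈ B}).Countable

lemma goodSet_open {U : Set (ℝ → ℝ)} (hU : IsOpen U) : GoodSet U := by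
  refine ⟨?_, ?_, ?_⟩
  · exact measurableSet_of_left_nbhd fun t ht => by
      obtain ⟨δ, hδ, hsub⟩ := lf_left hU ht
      exact ⟨δ, hδ, fun t' ht' => hsub t' ht'⟩
  · exact measurableSet_of_right_nbhd fun t ht => by
      obtain ⟨δ, hδ, hsub⟩ := rf_right hU ht
      exact ⟨δ, hδ, fun t' ht' => hsub t' ht'⟩
  · rw [Set.symmDiff_def]
    apply Set.Countable.union
    · apply countable_of_left_nbhd (W := {t : ℝ | rf t ∈ U})
      rintro t ⟨htL, htR⟩
      obtain ⟨δ, hδ, hsub⟩ := lf_left_rf hU htL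
      exact ⟨htR, δ, hδ, fun t' ht' => hsub t' ht'⟩
    · apply countable_of_right_nbhd (W := {t : ℝ | lf t ∈ U})
      rintro t ⟨htR, htL⟩
      obtain ⟨δ, hδ, hsub⟩ := rf_right_lf hU htR
      exact ⟨htL, δ, hδ, fun t' ht' => hsub t' ht'⟩

lemma goodSet_of_measurable {B : Set (ℝ → ℝ)}
    (hB : MeasurableSet[borel (ℝ → ℝ)] B) : GoodSet B := by
  have hB' : MeasurableSet[MeasurableSpace.generateFrom {s : Set (ℝ → ℝ) | IsOpen s}] B := hB
  refine MeasurableSpace.generateFrom_induction {s : Set (ℝ → ℝ) | IsOpen s}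
    (fun s _ => GoodSet s) (fun t ht _ => goodSet_open ht)
    ⟨by simp, by simp, by simp⟩ ?_ ?_ B hB'
  · intro t ht ih
    obtain ⟨h1, h2, h3⟩ := ih
    refine ⟨h1.compl, h2.compl, ?_⟩
    have : symmDiff {t_1 : ℝ | lf t_1 ∈ tᶜ} {t_1 : ℝ | rf t_1 ∈ tᶜ}
        = symmDiff {t_1 : ℝ | lf t_1 ∈ t} {t_1 : ℝ | rf t_1 ∈ t} := by
      have e1 : {t_1 : ℝ | lf t_1 ∈ tᶜ} = {t_1 : ℝ | lf t_1 ∈ t}ᶜ := rfl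
      have e2 : {t_1 : ℝ | rf t_1 ∈ tᶜ} = {t_1 : ℝ | rf t_1 ∈ t}ᶜ := rfl
      rw [e1, e2, compl_symmDiff_compl]
    rwa [this]
  · intro s hs ih
    refine ⟨?_, ?_, ?_⟩
    · have : {t : ℝ | lf t ∈ ⋃ i, s i} = ⋃ i, {t : ℝ | lf t ∈ s i} := by
        ext t; simp
      rw [this]; exact MeasurableSet.iUnion fun i => (ih i).1
    · have : {t : ℝ | rf t ∈ ⋃ i, s i} = ⋃ i, {t : ℝ | rf t ∈ s i} := by
        ext t; simp
      rw [this]; exact MeasurableSet.iUnion fun i => (ih i).2.1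
    · apply Set.Countable.mono ?_ (Set.countable_iUnion fun i => (ih i).2.2)
      intro x hx
      rw [Set.mem_symmDiff] at hx
      rcases hx with ⟨hL, hR⟩ | ⟨hR, hL⟩
      · simp only [Set.mem_setOf_eq, Set.mem_iUnion] at hL hR
        obtain ⟨i, hi⟩ := hL
        push_neg at hR
        exact Set.mem_iUnion.mpr ⟨i, Set.mem_symmDiff.mpr (Or.inl ⟨hi, hR i⟩)⟩
      · simp only [Set.mem_setOf_eq, Set.mem_iUnion] at hL hR
        obtain ⟨i, hi⟩ := hR
        push_neg at hL
        exact Set.mem_iUnion.mpr ⟨i, Set.mem_symmDiff.mpr (Or.inr ⟨hi, hL i⟩)⟩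

/-- The "double arrow" set over a compact base set `C`. -/
def KSet (C : Set ℝ) : Set (ℝ → ℝ) := {x | ∃ t ∈ C, x = lf t ∨ x = rf t}

lemma near {C : Set ℝ} {x : ℝ → ℝ} (hx : x ∈ closure (KSet C)) (s₁ s₂ : ℝ)
    {ε : ℝ} (hε : 0 < ε) :
    ∃ t ∈ C, ∃ y : ℝ → ℝ, (y = lf t ∨ y = rf t) ∧ |y s₁ - x s₁| < ε ∧ |y s₂ - x s₂| < ε := by
  set O := {y : ℝ → ℝ | |y s₁ - x s₁| < ε ∧ |y s₂ - x s₂| < ε} with hO_def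
  have hO : IsOpen O := by
    have h1 : Continuous fun y : ℝ → ℝ => |y s₁ - x s₁| :=
      ((continuous_apply s₁).sub continuous_const).abs
    have h2 : Continuous fun y : ℝ → ℝ => |y s₂ - x s₂| :=
      ((continuous_apply s₂).sub continuous_const).abs
    have : O = (fun y : ℝ → ℝ => |y s₁ - x s₁|) ⁻¹' (Set.Iio ε) ∩
        (fun y : ℝ → ℝ => |y s₂ - x s₂|) ⁻¹' (Set.Iio ε) := rfl
    rw [this]
    exact (isOpen_Iio.preimage h1).inter (isOpen_Iio.preimage h2)
  have hxO : x ∈ O := by simp [hO_def, hε]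
  obtain ⟨y, hyO, hyK⟩ := _root_.mem_closure_iff.mp hx O hO hxO
  obtain ⟨t, htC, hy⟩ := hyK
  exact ⟨t, htC, y, hy, hyO.1, hyO.2⟩

lemma isCompact_KSet {C : Set ℝ} (hC : IsCompact C) (hC1 : C ⊆ Set.Icc 0 1) :
    IsCompact (KSet C) := by
  have hsub : KSet C ⊆ Set.pi Set.univ (fun _ : ℝ => Set.Icc (0:ℝ) 1) := by
    rintro x ⟨t, _, rfl | rfl⟩ s _
    · rcases lf_val01 t s with h | h <;> rw [h] <;> norm_num
    · rcases rf_val01 t s with h | h <;> rw [h] <;> norm_num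
  have hclosed : IsClosed (KSet C) := by
    apply isClosed_of_closure_subset
    intro x hx
    -- value dichotomy
    have hF0 : ∀ s, x s = 0 ∨ x s = 1 := by
      intro s
      by_contra hcon
      push_neg at hcon
      obtain ⟨h0, h1⟩ := hcon
      have hε : 0 < min |x s - 0| |x s - 1| := by
        apply lt_min
        · exact abs_pos.mpr (sub_ne_zero.mpr h0)
        · exact abs_pos.mpr (sub_ne_zero.mpr h1)
      obtain ⟨t, _, y, hy, hclose, _⟩ := near hx s s hε
      have hval : y s = 0 ∨ y s = 1 := by
        rcases hy with rfl | rfl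
        exacts [lf_val01 t s, rf_val01 t s]
      rcases hval with hv | hv
      · rw [hv] at hclose
        have : |(0:ℝ) - x s| = |x s - 0| := abs_sub_comm _ _
        rw [this] at hclose
        exact absurd hclose (not_lt.mpr (min_le_left _ _))
      · rw [hv] at hclose
        have : |(1:ℝ) - x s| = |x s - 1| := abs_sub_comm _ _
        rw [this] at hclose
        exact absurd hclose (not_lt.mpr (min_le_right _ _))
    -- x is 1 far to the left, 0 far to the right
    have hFneg : ∀ s : ℝ, s < 0 → x s = 1 := by
      intro s hs
      obtain ⟨t, htC, y, hy, hclose, _⟩ := near hx s s (by norm_num : (0:ℝ) < 1/2)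
      have ht01 := hC1 htC
      have hys : y s = 1 := by
        rcases hy with rfl | rfl
        · simp [lf, lt_of_lt_of_le hs ht01.1]
        · simp [rf, le_trans (le_of_lt hs) ht01.1]
      rw [hys] at hclose
      rcases hF0 s with h | h
      · rw [h] at hclose; norm_num at hclose
      · exact h
    have hFpos : ∀ s : ℝ, 1 < s → x s = 0 := by
      intro s hs
      obtain ⟨t, htC, y, hy, hclose, _⟩ := near hx s s (by norm_num : (0:ℝ) < 1/2)
      have ht01 := hC1 htC
      have hys : y s = 0 := by
        rcases hy with rfl | rfl
        · simp [lf, not_lt.mpr (le_of_lt (lt_of_le_of_lt ht01.2 hs))]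
        · simp [rf, not_le.mpr (lt_of_le_of_lt ht01.2 hs)]
      rw [hys] at hclose
      rcases hF0 s with h | h
      · exact h
      · rw [h] at hclose; norm_num at hclose
    set T := {s : ℝ | x s = 1} with hT_def
    have hTne : T.Nonempty := ⟨-1, hFneg (-1) (by norm_num)⟩
    have hTbdd : BddAbove T := by
      refine ⟨1, fun s hs => ?_⟩
      by_contra hgt
      push_neg at hgt
      have := hFpos s hgt
      rw [hs] at this  -- hs : x s = 1
      norm_num at this
    set t₀ := sSup T with ht₀_def
    have hF2 : ∀ s, s < t₀ → x s = 1 := by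
      intro s hs
      obtain ⟨s₁, hs₁T, hss₁⟩ := exists_lt_of_lt_csSup hTne hs
      obtain ⟨t, htC, y, hy, hc1, hc2⟩ := near hx s s₁ (by norm_num : (0:ℝ) < 1/2)
      -- y s₁ = 1
      have hys₁ : y s₁ = 1 := by
        have hval : y s₁ = 0 ∨ y s₁ = 1 := by
          rcases hy with rfl | rfl
          exacts [lf_val01 t s₁, rf_val01 t s₁]
        rcases hval with hv | hv
        · rw [hv, hs₁T] at hc2; norm_num at hc2
        · exact hv
      -- hence s₁ < t resp. s₁ ≤ t, so y s = 1
      have hys : y s = 1 := by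
        rcases hy with rfl | rfl
        · have hst : s₁ < t := by
            by_contra hle
            have : lf t s₁ = 0 := by simp [lf, hle]
            rw [this] at hys₁; norm_num at hys₁
          simp [lf, lt_trans hss₁ hst]
        · have hst : s₁ ≤ t := by
            by_contra hle
            have : rf t s₁ = 0 := by simp [rf, hle]
            rw [this] at hys₁; norm_num at hys₁
          simp [rf, le_trans (le_of_lt hss₁) hst]
      rw [hys] at hc1
      rcases hF0 s with h | h
      · rw [h] at hc1; norm_num at hc1
      · exact h
    have hF3 : ∀ s, t₀ < s → x s = 0 := by
      intro s hs
      rcases hF0 s with h | h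
      · exact h
      · exact absurd (le_csSup hTbdd h) (not_le.mpr hs)
    have hF4 : t₀ ∈ C := by
      have : t₀ ∈ closure C := by
        rw [Metric.mem_closure_iff]
        intro ε hε
        obtain ⟨s₁, hs₁T, hss₁⟩ := exists_lt_of_lt_csSup hTne
          (show t₀ - ε < t₀ by linarith)
        have hs₁le : s₁ ≤ t₀ := le_csSup hTbdd hs₁T
        have hxs₂ : x (t₀ + ε/2) = 0 := hF3 _ (by linarith)
        obtain ⟨t, htC, y, hy, hc1, hc2⟩ := near hx s₁ (t₀ + ε/2)
          (by norm_num : (0:ℝ) < 1/2)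
        have hys₁ : y s₁ = 1 := by
          have hval : y s₁ = 0 ∨ y s₁ = 1 := by
            rcases hy with rfl | rfl
            exacts [lf_val01 t s₁, rf_val01 t s₁]
          rcases hval with hv | hv
          · rw [hv, hs₁T] at hc1; norm_num at hc1
          · exact hv
        have hys₂ : y (t₀ + ε/2) = 0 := by
          have hval : y (t₀ + ε/2) = 0 ∨ y (t₀ + ε/2) = 1 := by
            rcases hy with rfl | rfl
            exacts [lf_val01 t _, rf_val01 t _]
          rcases hval with hv | hv
          · exact hv
          · rw [hv, hxs₂] at hc2; norm_num at hc2
        refine ⟨t, htC, ?_⟩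
        have hbounds : t₀ - ε < t ∧ t < t₀ + ε := by
          rcases hy with rfl | rfl
          · have h1 : s₁ < t := by
              by_contra hle
              have : lf t s₁ = 0 := by simp [lf, hle]
              rw [this] at hys₁; norm_num at hys₁
            have h2 : ¬ ((t₀ + ε/2) < t) := by
              intro hlt
              have : lf t (t₀ + ε/2) = 1 := by simp [lf, hlt]
              rw [this] at hys₂; norm_num at hys₂
            push_neg at h2
            constructor <;> linarith
          · have h1 : s₁ ≤ t := by
              by_contra hle
              have : rf t s₁ = 0 := by simp [rf, hle]
              rw [this] at hys₁; norm_num at hys₁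
            have h2 : ¬ ((t₀ + ε/2) ≤ t) := by
              intro hlt
              have : rf t (t₀ + ε/2) = 1 := by simp [rf, hlt]
              rw [this] at hys₂; norm_num at hys₂
            push_neg at h2
            constructor <;> linarith
        rw [Real.dist_eq, abs_lt]
        constructor <;> linarith [hbounds.1, hbounds.2]
      rwa [hC.isClosed.closure_eq] at this
    rcases hF0 t₀ with h0 | h1
    · refine ⟨t₀, hF4, Or.inl ?_⟩
      funext s
      rcases lt_trichotomy s t₀ with hlt | heq | hgt
      · rw [hF2 s hlt]; simp [lf, hlt]
      · subst heq; rw [h0]; simp [lf]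
      · rw [hF3 s hgt]; simp [lf, not_lt.mpr (le_of_lt hgt)]
    · refine ⟨t₀, hF4, Or.inr ?_⟩
      funext s
      rcases lt_trichotomy s t₀ with hlt | heq | hgt
      · rw [hF2 s hlt]; simp [rf, le_of_lt hlt]
      · subst heq; rw [h1]; simp [rf]
      · rw [hF3 s hgt]; simp [rf, not_le.mpr hgt]
  exact (isCompact_univ_pi fun _ => isCompact_Icc).of_isClosed_subset hclosed hsub

/-! ### A Vitali set -/

/-- The rationals as an additive subgroup of `ℝ`. -/
def QS : AddSubgroup ℝ := AddMonoidHom.range ((Rat.castHom ℝ).toAddMonoidHom)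

lemma mem_QS_iff {x : ℝ} : x ∈ QS ↔ ∃ q : ℚ, (q : ℝ) = x := Iff.rfl

lemma int_mem_QS (n : ℤ) : (n : ℝ) ∈ QS := ⟨(n : ℚ), by simp⟩

/-- Representative map for the Vitali set. -/
def vrep (z : ℝ ⧸ QS) : ℝ := Int.fract (Quotient.out z)

/-- A Vitali set. -/
def VitaliSet : Set ℝ := Set.range vrep

lemma vitali_subset : VitaliSet ⊆ Set.Ico 0 1 := by
  rintro x ⟨z, rfl⟩
  exact ⟨Int.fract_nonneg _, Int.fract_lt_one _⟩

lemma mk_vrep (z : ℝ ⧸ QS) : (vrep z : ℝ ⧸ QS) = z := by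
  have h1 : ((Quotient.out z : ℝ) : ℝ ⧸ QS) = z := QuotientAddGroup.out_eq' z
  have h2 : ((vrep z : ℝ) : ℝ ⧸ QS) = ((Quotient.out z : ℝ) : ℝ ⧸ QS) := by
    apply (QuotientAddGroup.eq (s := QS)).mpr
    have h3 : -vrep z + Quotient.out z = ((⌊(Quotient.out z : ℝ)⌋ : ℤ) : ℝ) := by
      unfold vrep Int.fract; ring
    rw [h3]
    exact int_mem_QS _
  exact h2.trans h1

lemma vitali_exists (x : ℝ) : ∃ v ∈ VitaliSet, x - v ∈ QS := by
  refine ⟨vrep (x : ℝ ⧸ QS), ⟨_, rfl⟩, ?_⟩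
  have h : ((vrep (x : ℝ ⧸ QS) : ℝ) : ℝ ⧸ QS) = (x : ℝ ⧸ QS) := mk_vrep _
  have h2 := (QuotientAddGroup.eq (s := QS)).mp h
  have h3 : x - vrep (x : ℝ ⧸ QS) = -vrep (x : ℝ ⧸ QS) + x := by ring
  rw [h3]
  exact h2

lemma vitali_inj {v v' : ℝ} (hv : v ∈ VitaliSet) (hv' : v' ∈ VitaliSet)
    (h : v - v' ∈ QS) : v = v' := by
  obtain ⟨z, rfl⟩ := hv
  obtain ⟨z', rfl⟩ := hv'
  have : ((vrep z : ℝ) : ℝ ⧸ QS) = ((vrep z' : ℝ) : ℝ ⧸ QS) := by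
    apply (QuotientAddGroup.eq (s := QS)).mpr
    have : -vrep z + vrep z' = -(vrep z - vrep z') := by ring
    rw [this]
    exact AddSubgroup.neg_mem _ h
  rw [mk_vrep, mk_vrep] at this
  rw [this]

lemma mem_QS_of_rat (q : ℚ) : ((q : ℝ)) ∈ QS := ⟨q, rfl⟩

instance : Infinite (Set.Icc (-1:ℚ) 1) :=
  Set.Icc.infinite (by norm_num : (-1:ℚ) < 1)

theorem vitali_not_nullMeasurable : ¬ NullMeasurableSet VitaliSet volume := by
  intro h
  set J := Set.Icc (-1:ℚ) 1 with hJ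
  set Tq : J → Set ℝ := fun q => (fun x : ℝ => x + (q : ℝ)) ⁻¹' VitaliSet with hTq
  have hmp : ∀ q : J, MeasurePreserving (fun x : ℝ => x + (q : ℝ)) volume volume :=
    fun q => measurePreserving_add_right volume _
  have hnm : ∀ q : J, NullMeasurableSet (Tq q) volume :=
    fun q => h.preimage (hmp q).quasiMeasurePreserving
  have hvol : ∀ q : J, volume (Tq q) = volume VitaliSet :=
    fun q => (hmp q).measure_preimage h
  have hdisj : Pairwise (Function.onFun Disjoint Tq) := by
    intro q q' hne
    apply Set.disjoint_left.mpr
    intro x hx hx'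
    have h1 : x + (q : ℝ) ∈ VitaliSet := hx
    have h2 : x + (q' : ℝ) ∈ VitaliSet := hx'
    have h3 : (x + ((q:ℚ) : ℝ)) - (x + ((q':ℚ) : ℝ)) ∈ QS := by
      have hm := mem_QS_of_rat ((q:ℚ) - (q':ℚ))
      have he : (((q:ℚ) - (q':ℚ) : ℚ) : ℝ) = (x + ((q:ℚ):ℝ)) - (x + ((q':ℚ):ℝ)) := by
        push_cast; ring
      rwa [he] at hm
    have h4 := vitali_inj h1 h2 h3
    have h5 : ((q:ℚ) : ℝ) = ((q':ℚ) : ℝ) := by linarith [h4]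
    exact hne (Subtype.ext (by exact_mod_cast h5))
  have hunion : volume (⋃ q : J, Tq q) = ∑' _ : J, volume VitaliSet := by
    rw [measure_iUnion₀ (hdisj.mono fun i j hij => hij.aedisjoint) hnm]
    exact tsum_congr hvol
  have hcover : Set.Icc (0:ℝ) 1 ⊆ ⋃ q : J, Tq q := by
    intro x hx
    obtain ⟨v, hvV, hq⟩ := vitali_exists x
    obtain ⟨q₀, hq₀⟩ := hq
    have h1 : (q₀ : ℝ) = x - v := hq₀
    have hv01 := vitali_subset hvV
    have hq₀b : q₀ ∈ Set.Icc (-1:ℚ) 1 := by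
      have h2l : (-1:ℝ) ≤ (q₀:ℝ) := by linarith [hx.1, hv01.2]
      have h2r : (q₀:ℝ) ≤ 1 := by linarith [hx.2, hv01.1]
      exact ⟨by exact_mod_cast h2l, by exact_mod_cast h2r⟩
    refine Set.mem_iUnion.mpr ⟨⟨-q₀, ?_⟩, ?_⟩
    · exact ⟨by linarith [hq₀b.2], by linarith [hq₀b.1]⟩
    · show x + ((-q₀ : ℚ) : ℝ) ∈ VitaliSet
      have h3 : x + ((-q₀ : ℚ) : ℝ) = v := by push_cast; linarith [h1]
      rwa [h3]
  have hbound : (⋃ q : J, Tq q) ⊆ Set.Icc (-1:ℝ) 2 := by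
    rintro x hx
    obtain ⟨q, hq⟩ := Set.mem_iUnion.mp hx
    have h1 : x + (q : ℝ) ∈ VitaliSet := hq
    have h2 := vitali_subset h1
    have hqbl : (-1:ℝ) ≤ ((q:ℚ):ℝ) := by exact_mod_cast q.2.1
    have hqbr : ((q:ℚ):ℝ) ≤ 1 := by exact_mod_cast q.2.2
    exact ⟨by linarith [h2.1, h2.2, hqbl, hqbr], by linarith [h2.1, h2.2, hqbl, hqbr]⟩
  by_cases hV : volume VitaliSet = 0
  · have h1 : volume (⋃ q : J, Tq q) = 0 := by
      rw [hunion, hV]; simp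
    have h2 : volume (Set.Icc (0:ℝ) 1) ≤ 0 := h1 ▸ measure_mono hcover
    rw [Real.volume_Icc] at h2
    norm_num at h2
  · have h1 : volume (⋃ q : J, Tq q) = ⊤ := by
      rw [hunion]
      exact ENNReal.tsum_const_eq_top_of_ne_zero hV
    have h2 : volume (⋃ q : J, Tq q) ≤ volume (Set.Icc (-1:ℝ) 2) := measure_mono hbound
    rw [h1, Real.volume_Icc] at h2
    have h3 : (⊤ : ℝ≥0∞) ≤ ENNReal.ofReal 3 := by convert h2 using 2; norm_num
    exact ENNReal.ofReal_ne_top (top_le_iff.mp h3)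

/-! ### The locally convex space `E = ℝ → ℝ` with its Borel σ-algebra -/

/-- Type synonym to carry the Borel σ-algebra instead of the product σ-algebra. -/
def EE : Type := ℝ → ℝ

instance : AddCommGroup EE := inferInstanceAs (AddCommGroup (ℝ → ℝ))
instance : Module ℝ EE := inferInstanceAs (Module ℝ (ℝ → ℝ))
instance : TopologicalSpace EE := inferInstanceAs (TopologicalSpace (ℝ → ℝ))
instance : IsTopologicalAddGroup EE := inferInstanceAs (IsTopologicalAddGroup (ℝ → ℝ))
instance : ContinuousSMul ℝ EE := inferInstanceAs (ContinuousSMul ℝ (ℝ → ℝ))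
instance : T2Space EE := inferInstanceAs (T2Space (ℝ → ℝ))
instance : MeasurableSpace EE := borel EE
instance : BorelSpace EE := ⟨rfl⟩

lemma locallyConvex_pi : LocallyConvexSpace ℝ (ℝ → ℝ) := by
  rw [locallyConvexSpace_iff_exists_convex_subset]
  intro x U hU
  rw [nhds_pi] at hU
  obtain ⟨I, hIfin, t, ht, hsub⟩ := Filter.mem_pi.mp hU
  have hball : ∀ i : ℝ, ∃ ε > 0, Metric.ball (x i) ε ⊆ t i := fun i =>
    Metric.mem_nhds_iff.mp (ht i)
  choose ε hε hεsub using hball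
  refine ⟨I.pi (fun i => Metric.ball (x i) (ε i)), ?_, ?_, ?_⟩
  · rw [nhds_pi]
    exact Filter.mem_pi.mpr ⟨I, hIfin, fun i => Metric.ball (x i) (ε i),
      fun i => Metric.ball_mem_nhds _ (hε i), le_refl _⟩
  · exact convex_pi fun i _ => convex_ball _ _
  · exact subset_trans (Set.pi_mono fun i _ => hεsub i) hsub

instance : LocallyConvexSpace ℝ EE := locallyConvex_pi

/-- `KSet` viewed as a subset of `EE`. -/
def KSetE (C : Set ℝ) : Set EE := KSet C

/-! ### The probability space and the maps -/

/-- Lebesgue measure restricted to `[0,1]`. -/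
def mu0 : Measure ℝ := volume.restrict (Set.Icc 0 1)

instance : IsProbabilityMeasure mu0 := by
  constructor
  rw [mu0, Measure.restrict_apply_univ, Real.volume_Icc]
  norm_num

/-- The sample space: `ℝ` with the `mu0`-completed σ-algebra. -/
abbrev Om : Type := NullMeasurableSpace ℝ mu0

def fmap : Om → EE := fun t => lf t

open Classical in
noncomputable def gmap : Om → EE :=
  fun t => if (t : ℝ) ∈ VitaliSet then -(lf t) else -(rf t)

lemma measurable_fmap : Measurable fmap := by
  intro B hB
  have hg := goodSet_of_measurable (B := B) hB
  exact (hg.1.nullMeasurableSet : NullMeasurableSet {t : ℝ | lf t ∈ B} mu0)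

lemma gmap_preimage (B : Set EE) :
    gmap ⁻¹' B =
      ({t : ℝ | lf t ∈ (fun x : EE => -x) ⁻¹' B} ∩ {t : ℝ | rf t ∈ (fun x : EE => -x) ⁻¹' B}) ∪
      (({t : ℝ | lf t ∈ (fun x : EE => -x) ⁻¹' B} \ {t : ℝ | rf t ∈ (fun x : EE => -x) ⁻¹' B})
        ∩ VitaliSet) ∪
      (({t : ℝ | rf t ∈ (fun x : EE => -x) ⁻¹' B} \ {t : ℝ | lf t ∈ (fun x : EE => -x) ⁻¹' B})
        \ VitaliSet) := by
  show ((fun t : ℝ => gmap t) ⁻¹' B : Set ℝ) = _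
  ext t
  have hL : (lf t ∈ (fun x : EE => -x) ⁻¹' B) ↔ (-(lf t) ∈ B) := Iff.rfl
  have hR : (rf t ∈ (fun x : EE => -x) ⁻¹' B) ↔ (-(rf t) ∈ B) := Iff.rfl
  by_cases hv : (t : ℝ) ∈ VitaliSet
  · have hg : gmap t = -(lf t) := by unfold gmap; exact if_pos hv
    simp only [Set.mem_preimage, hg, Set.mem_union, Set.mem_inter_iff,
      Set.mem_diff, Set.mem_setOf_eq, hL, hR]
    tauto
  · have hg : gmap t = -(rf t) := by unfold gmap; exact if_neg hv
    simp only [Set.mem_preimage, hg, Set.mem_union, Set.mem_inter_iff,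
      Set.mem_diff, Set.mem_setOf_eq, hL, hR]
    tauto

lemma measurable_gmap : Measurable gmap := by
  intro B hB
  have hBneg : MeasurableSet ((fun x : EE => -x) ⁻¹' B) :=
    (continuous_neg (G := EE)).measurable hB
  have hg := goodSet_of_measurable (B := (fun x : EE => -x) ⁻¹' B) hBneg
  have hms : MeasurableSet (gmap ⁻¹' B : Set ℝ) := by
    rw [show (gmap ⁻¹' B : Set ℝ) = _ from gmap_preimage B]
    refine ((hg.1.inter hg.2.1).union ?_).union ?_
    · exact (hg.2.2.mono fun x hx =>
        Set.mem_symmDiff.mpr (Or.inl ⟨hx.1.1, hx.1.2⟩)).measurableSet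
    · exact (hg.2.2.mono fun x hx =>
        Set.mem_symmDiff.mpr (Or.inr ⟨hx.1.1, hx.1.2⟩)).measurableSet
  exact (hms.nullMeasurableSet : NullMeasurableSet _ mu0)

/-- Approximation of good sets from inside by compacta in the base. -/
lemma exists_compact_approx {B : Set (ℝ → ℝ)} (hgood : GoodSet B) {r : ℝ≥0∞}
    (hr : r < mu0 {t : ℝ | lf t ∈ B}) :
    ∃ C : Set ℝ, IsCompact C ∧ C ⊆ Set.Icc 0 1 ∧
      (∀ t ∈ C, lf t ∈ B ∧ rf t ∈ B) ∧ r < mu0 C := by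
  obtain ⟨hL, hR, hsd⟩ := hgood
  set S := ({t : ℝ | lf t ∈ B} ∩ {t : ℝ | rf t ∈ B}) ∩ Set.Icc 0 1 with hS
  have hSm : MeasurableSet S := (hL.inter hR).inter measurableSet_Icc
  have h1 : mu0 {t : ℝ | lf t ∈ B} = volume ({t : ℝ | lf t ∈ B} ∩ Set.Icc 0 1) :=
    Measure.restrict_apply' measurableSet_Icc
  have hsub : {t : ℝ | lf t ∈ B} ∩ Set.Icc 0 1 ⊆
      S ∪ (symmDiff {t : ℝ | lf t ∈ B} {t : ℝ | rf t ∈ B}) := by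
    intro t ht
    by_cases hrft : rf t ∈ B
    · exact Or.inl ⟨⟨ht.1, hrft⟩, ht.2⟩
    · exact Or.inr (Set.mem_symmDiff.mpr (Or.inl ⟨ht.1, hrft⟩))
  have h2 : volume ({t : ℝ | lf t ∈ B} ∩ Set.Icc 0 1) ≤ volume S := by
    calc volume ({t : ℝ | lf t ∈ B} ∩ Set.Icc 0 1)
        ≤ volume (S ∪ (symmDiff {t : ℝ | lf t ∈ B} {t : ℝ | rf t ∈ B})) :=
          measure_mono hsub
      _ ≤ volume S + volume (symmDiff {t : ℝ | lf t ∈ B} {t : ℝ | rf t ∈ B}) :=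
          measure_union_le _ _
      _ = volume S + 0 := by rw [hsd.measure_zero]
      _ = volume S := by rw [add_zero]
  have hrS : r < volume S := lt_of_lt_of_le (h1 ▸ hr) h2
  obtain ⟨C, hCsub, hCcomp, hCr⟩ := hSm.exists_lt_isCompact hrS
  refine ⟨C, hCcomp, fun t ht => (hCsub ht).2, fun t ht => (hCsub ht).1, ?_⟩
  have hCmu : mu0 C = volume C := by
    rw [mu0, Measure.restrict_apply' measurableSet_Icc,
      Set.inter_eq_self_of_subset_left (fun t ht => (hCsub ht).2)]
  rw [hCmu]
  exact hCr

noncomputable def Pmeas : Measure Om := mu0.completion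

instance : IsProbabilityMeasure Pmeas := by
  constructor
  rw [Pmeas]
  exact (Measure.completion_apply mu0 univ).trans measure_univ

lemma innerRegular_map_fmap : (Pmeas.map fmap).InnerRegular := by
  constructor
  intro U hU r hr
  rw [Measure.map_apply measurable_fmap hU] at hr
  have hgood := goodSet_of_measurable (B := U) hU
  have hr' : r < mu0 {t : ℝ | lf t ∈ U} := hr
  obtain ⟨C, hCcomp, hCIcc, hCmem, hCr⟩ := exists_compact_approx hgood hr'
  have hKcomp : IsCompact (KSetE C) := isCompact_KSet hCcomp hCIcc
  have hKcl : IsClosed (KSetE C) := hKcomp.isClosed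
  have hKmeas : MeasurableSet (KSetE C) := hKcl.measurableSet
  refine ⟨KSetE C, ?_, hKcomp, ?_⟩
  · rintro x ⟨t, htC, rfl | rfl⟩
    · exact (hCmem t htC).1
    · exact (hCmem t htC).2
  · rw [Measure.map_apply measurable_fmap hKmeas]
    have hCsub : (C : Set Om) ⊆ fmap ⁻¹' (KSetE C) := fun t ht => ⟨t, ht, Or.inl rfl⟩
    calc r < mu0 C := hCr
      _ = Pmeas (C : Set Om) := rfl
      _ ≤ Pmeas (fmap ⁻¹' (KSetE C)) := measure_mono hCsub

lemma innerRegular_map_gmap : (Pmeas.map gmap).InnerRegular := by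
  constructor
  intro U hU r hr
  rw [Measure.map_apply measurable_gmap hU] at hr
  set B' : Set EE := (fun x : EE => -x) ⁻¹' U with hB'def
  have hB'm : MeasurableSet B' := (continuous_neg (G := EE)).measurable hU
  have hgood := goodSet_of_measurable (B := B') hB'm
  -- pass from the measure of `gmap ⁻¹' U` to the measure of `{t | lf t ∈ B'}`
  have hsub : (gmap ⁻¹' U : Set ℝ) ⊆ {t : ℝ | lf t ∈ B'} ∪
      (symmDiff {t : ℝ | lf t ∈ B'} {t : ℝ | rf t ∈ B'}) := by
    rw [show (gmap ⁻¹' U : Set ℝ) = _ from gmap_preimage U]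
    rintro t ((h | h) | h)
    · exact Or.inl h.1
    · exact Or.inl h.1.1
    · exact Or.inr (Set.mem_symmDiff.mpr (Or.inr ⟨h.1.1, h.1.2⟩))
  have hmu_le : mu0 (gmap ⁻¹' U : Set ℝ) ≤ mu0 {t : ℝ | lf t ∈ B'} := by
    calc mu0 (gmap ⁻¹' U : Set ℝ)
        ≤ mu0 ({t : ℝ | lf t ∈ B'} ∪
            (symmDiff {t : ℝ | lf t ∈ B'} {t : ℝ | rf t ∈ B'})) := measure_mono hsub
      _ ≤ mu0 {t : ℝ | lf t ∈ B'} +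
            mu0 (symmDiff {t : ℝ | lf t ∈ B'} {t : ℝ | rf t ∈ B'}) := measure_union_le _ _
      _ = mu0 {t : ℝ | lf t ∈ B'} := by
          have h0 : mu0 (symmDiff {t : ℝ | lf t ∈ B'} {t : ℝ | rf t ∈ B'}) = 0 :=
            le_antisymm (le_trans (Measure.restrict_le_self _)
              (le_of_eq (hgood.2.2.measure_zero volume))) (by simp)
          rw [h0, add_zero]
  have hr' : r < mu0 {t : ℝ | lf t ∈ B'} := lt_of_lt_of_le hr hmu_le
  obtain ⟨C, hCcomp, hCIcc, hCmem, hCr⟩ := exists_compact_approx hgood hr'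
  have hKcompE : IsCompact (KSetE C) := isCompact_KSet hCcomp hCIcc
  have hKcomp' : IsCompact ((fun x : EE => -x) '' (KSetE C)) :=
    hKcompE.image (continuous_neg (G := EE))
  have hKcl' : IsClosed ((fun x : EE => -x) '' (KSetE C)) := hKcomp'.isClosed
  have hKmeas : MeasurableSet ((fun x : EE => -x) '' (KSetE C)) := hKcl'.measurableSet
  refine ⟨(fun x : EE => -x) '' (KSetE C), ?_, hKcomp', ?_⟩
  · rintro x ⟨y, ⟨t, htC, rfl | rfl⟩, rfl⟩
    · exact (hCmem t htC).1
    · exact (hCmem t htC).2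
  · rw [Measure.map_apply measurable_gmap hKmeas]
    have hCsub : (C : Set Om) ⊆ gmap ⁻¹' ((fun x : EE => -x) '' (KSetE C)) := by
      intro t ht
      have hmem : gmap t ∈ ((fun x : EE => -x) '' (KSetE C)) := by
        by_cases hv : (t : ℝ) ∈ VitaliSet
        · have hg : gmap t = -(lf t) := by unfold gmap; exact if_pos hv
          rw [hg]
          exact ⟨lf t, ⟨t, ht, Or.inl rfl⟩, rfl⟩
        · have hg : gmap t = -(rf t) := by unfold gmap; exact if_neg hv
          rw [hg]
          exact ⟨rf t, ⟨t, ht, Or.inr rfl⟩, rfl⟩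
      exact hmem
    calc r < mu0 C := hCr
      _ = Pmeas (C : Set Om) := rfl
      _ ≤ Pmeas (gmap ⁻¹' ((fun x : EE => -x) '' (KSetE C))) := measure_mono hCsub

lemma sum_preimage_eq : ((fun ω : Om => fmap ω + gmap ω) ⁻¹' {0}) = (VitaliSet : Set ℝ) := by
  show ((fun ω : ℝ => fmap ω + gmap ω) ⁻¹' {0} : Set ℝ) = VitaliSet
  ext t
  simp only [Set.mem_preimage, Set.mem_singleton_iff]
  by_cases hv : (t : ℝ) ∈ VitaliSet
  · have hg : gmap t = -(lf t) := by unfold gmap; exact if_pos hv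
    have : fmap t + gmap t = 0 := by rw [hg]; show lf t + -(lf t) = 0; abel
    simp [this, hv]
  · have hg : gmap t = -(rf t) := by unfold gmap; exact if_neg hv
    have hne : fmap t + gmap t ≠ 0 := by
      rw [hg]
      intro habs
      have h2 : lf t t + -(rf t t) = 0 := congrFun habs t
      have h3 : lf t t = 0 := by simp [lf]
      have h4 : rf t t = 1 := by simp [rf]
      rw [h3, h4] at h2
      norm_num at h2
    simp [hne, hv]

lemma not_measurable_sum :
    ¬ MeasurableSet ((fun ω : Om => fmap ω + gmap ω) ⁻¹' {0}) := by
  rw [sum_preimage_eq]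
  intro h
  have h' : NullMeasurableSet (VitaliSet : Set ℝ) mu0 := h
  obtain ⟨t, htsub, htm, htae⟩ := h'.exists_measurable_superset_ae_eq
  -- `htae : t =ᵐ[mu0] VitaliSet`
  apply vitali_not_nullMeasurable
  refine ⟨t ∩ Set.Icc 0 1, htm.inter measurableSet_Icc, ?_⟩
  rw [← measure_symmDiff_eq_zero_iff]
  have hVIcc : VitaliSet ∩ Set.Icc 0 1 = VitaliSet :=
    Set.inter_eq_self_of_subset_left (fun v hv => (Set.Ico_subset_Icc_self (vitali_subset hv)))
  have hkey : symmDiff VitaliSet (t ∩ Set.Icc 0 1) =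
      (symmDiff VitaliSet t) ∩ Set.Icc 0 1 := by
    conv_lhs => rw [← hVIcc]
    ext x
    simp only [Set.mem_symmDiff, Set.mem_inter_iff, Set.mem_setOf_eq]
    tauto
  rw [hkey]
  have h0 : mu0 (symmDiff VitaliSet t) = 0 := by
    rw [measure_symmDiff_eq_zero_iff]
    exact htae.symm
  rw [mu0, Measure.restrict_apply' measurableSet_Icc] at h0
  exact h0

end

/-- There exist a complete probability space `(Ω, Σ, P)`, a real
locally convex Hausdorff topological vector space `E`, and functions
`f, g : Ω → E` such that (a) `f⁻¹(B) ∈ Σ` and `g⁻¹(B) ∈ Σ` for every Borel set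
`B ⊆ E`; (b) the image measures `f[P]` and `g[P]` are Radon probability
measures on `E`; and (c) the sum `h = f + g` satisfies `h⁻¹({0}) ∉ Σ`.
Consequently, the class `L⁰(Ω, Σ, P, E)` of Borel-measurable functions `Ω → E`
whose image measure is Radon is not closed under addition. -/
theorem stmt11 :
    ∃ (Ω : Type) (mΩ : MeasurableSpace Ω) (P : @Measure Ω mΩ)
      (E : Type) (aE : AddCommGroup E)
      (modE : @Module ℝ E Real.semiring (@AddCommGroup.toAddCommMonoid E aE))
      (tE : TopologicalSpace E) (mE : MeasurableSpace E)
      (bE : @BorelSpace E tE mE) (f g : Ω → E),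
      @AdditionCounterexample Ω mΩ P E aE modE tE mE bE f g := by
  refine ⟨Om, inferInstance, Pmeas, EE, inferInstance, inferInstance, inferInstance,
    inferInstance, inferInstance, fmap, gmap,
    show Pmeas.IsComplete from Measure.completion.isComplete mu0,
    inferInstance, inferInstance, inferInstance, inferInstance, inferInstance,
    fun B hB => measurable_fmap hB,
    fun B hB => measurable_gmap hB,
    Measure.isProbabilityMeasure_map measurable_fmap.aemeasurable,
    Measure.isProbabilityMeasure_map measurable_gmap.aemeasurable,
    innerRegular_map_fmap,
    innerRegular_map_gmap,
    not_measurable_sum⟩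
end
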